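/- arXiv:2203.14099 — 8 statements merged into one kernel-verified Lean document; each statement's English description precedes it below -/
import Mathlib

section
/- Let W be an N×N real symmetric matrix with nonnegative entries and row sums 1, λ ∈ (0,1], L := λ·(I_N − (1−λ)W)⁻¹, and C := (1/N)·1_N·1_Nᵀ. Let θ be a random vector in ℝ^N with mean zero and covariance E[θθᵀ] = I_N, let ℳ ⊆ {1,…,N} with |ℳ| = M, and let v be a random vector with v_i = 0 for i ∉ ℳ, uncorrelated with θ (E[θvᵀ] = 0), mean zero, and covariance E[vvᵀ] = d·V where V is diagonal with V_{mm} = 1 for m ∈ ℳ and d ≥ 0. Set θ̃ := θ + v. Then the Friedkin–Johnsen consensus error satisfies E[‖Lθ̃ − Cθ‖²] = E[‖(L − C)θ̃‖²] + d·M/N ≥ d·M/N, where d·M/N = E[‖Cv‖²] is the error of the standard consensus protocol. In particular, in the presence of (non-malicious) outliers, standard consensus yields error no larger than the Friedkin–Johnsen dynamics for any λ ∈ (0,1]. -/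
open Matrix MeasureTheory



lemma aux_int_mul {Ω : Type*} [MeasurableSpace Ω] {μ : Measure Ω}
    {f g : Ω → ℝ} (hf : MemLp f 2 μ) (hg : MemLp g 2 μ) :
    Integrable (fun ω => f ω * g ω) μ := by
  have h : MemLp (g • f) 1 μ := hf.smul hg (hpqr := ⟨by simp [ENNReal.inv_two_add_inv_two]⟩)
  have := memLp_one_iff_integrable.mp h
  exact (by simpa [Pi.smul_apply, smul_eq_mul, mul_comm] using this : Integrable (f * g) μ)

lemma aux_memLp_mulVec {N : ℕ} {Ω : Type*} [MeasurableSpace Ω] {μ : Measure Ω}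
    (B : Matrix (Fin N) (Fin N) ℝ) {x : Ω → Fin N → ℝ}
    (hx : ∀ j, MemLp (fun ω => x ω j) 2 μ) (i : Fin N) :
    MemLp (fun ω => B.mulVec (x ω) i) 2 μ := by
  have : (fun ω => B.mulVec (x ω) i) = fun ω => ∑ j, B i j * x ω j := by
    funext ω; simp [Matrix.mulVec, dotProduct]
  rw [this]
  have h := memLp_finset_sum' (μ := μ) (p := 2) Finset.univ (f := fun j ω => B i j * x ω j) (fun j _ => (hx j).const_mul (B i j))
  have he : (∑ j : Fin N, fun ω => B i j * x ω j) = fun ω => ∑ j, B i j * x ω j := by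
    funext ω; simp
  rwa [he] at h

lemma aux_cov_expand {N : ℕ} {Ω : Type*} [MeasurableSpace Ω] {μ : Measure Ω}
    {u w : Ω → Fin N → ℝ} (hu : ∀ j, MemLp (fun ω => u ω j) 2 μ)
    (hw : ∀ j, MemLp (fun ω => w ω j) 2 μ) (a b : Fin N → ℝ) :
    ∫ ω, (∑ j, a j * u ω j) * (∑ k, b k * w ω k) ∂μ
      = ∑ j, ∑ k, a j * b k * ∫ ω, u ω j * w ω k ∂μ := by
  have hint : ∀ j k : Fin N, Integrable (fun ω => u ω j * w ω k) μ :=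
    fun j k => aux_int_mul (hu j) (hw k)
  have h1 : ∀ ω, (∑ j, a j * u ω j) * (∑ k, b k * w ω k)
      = ∑ j, ∑ k, a j * b k * (u ω j * w ω k) := by
    intro ω; rw [Finset.sum_mul_sum]
    exact Finset.sum_congr rfl fun j _ => Finset.sum_congr rfl fun k _ => by ring
  simp_rw [h1]
  rw [integral_finset_sum _ (fun j _ =>
    integrable_finset_sum _ (fun k _ => (hint j k).const_mul _))]
  refine Finset.sum_congr rfl fun j _ => ?_
  rw [integral_finset_sum _ (fun k _ => (hint j k).const_mul _)]
  exact Finset.sum_congr rfl fun k _ => integral_const_mul _ _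

lemma aux_colL {N : ℕ} (W : Matrix (Fin N) (Fin N) ℝ) (hsymm : W.IsSymm)
    (hnonneg : ∀ i j, 0 ≤ W i j) (hrow : ∀ i, ∑ j, W i j = 1)
    {lam : ℝ} (hlam0 : 0 < lam) (hlam1 : lam ≤ 1)
    (j : Fin N) : ∑ i, (lam • (1 - (1 - lam) • W)⁻¹) i j = 1 := by
  set A : Matrix (Fin N) (Fin N) ℝ := 1 - (1 - lam) • W with hA
  have hAapp : ∀ k m, A k m = (if k = m then (1:ℝ) else 0) - (1 - lam) * W k m := by
    intro k m
    simp [hA, Matrix.sub_apply, Matrix.one_apply]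
  have hWkk : ∀ k, W k k ≤ 1 := by
    intro k
    have h := Finset.single_le_sum (f := fun j => W k j) (fun j _ => hnonneg k j)
      (Finset.mem_univ k)
    simpa [hrow k] using h
  have hdet : A.det ≠ 0 := by
    apply det_ne_zero_of_sum_row_lt_diag
    intro k
    have h1 : ∑ m ∈ Finset.univ.erase k, ‖A k m‖
        = (1 - lam) * (1 - W k k) := by
      have : ∀ m ∈ Finset.univ.erase k, ‖A k m‖ = (1 - lam) * W k m := by
        intro m hm
        have hmk : ¬ (k = m) := fun h => (Finset.mem_erase.mp hm).1 h.symm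
        rw [hAapp, if_neg hmk, zero_sub, Real.norm_eq_abs, abs_neg,
          abs_of_nonneg (by nlinarith [hnonneg k m])]
      rw [Finset.sum_congr rfl this, Finset.sum_erase_eq_sub (Finset.mem_univ k),
        ← Finset.mul_sum, hrow k]
      ring
    have h2 : ‖A k k‖ = 1 - (1 - lam) * W k k := by
      rw [hAapp, if_pos rfl, Real.norm_eq_abs, abs_of_nonneg (by nlinarith [hnonneg k k, hWkk k])]
    rw [h1, h2]
    nlinarith [hnonneg k k]
  have hU : IsUnit A.det := isUnit_iff_ne_zero.mpr hdet
  have hcolW : ∀ m, ∑ i, W i m = 1 := by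
    intro m
    calc ∑ i, W i m = ∑ i, W m i := Finset.sum_congr rfl fun i _ => (hsymm.apply i m).symm
      _ = 1 := hrow m
  have hcolA : ∀ m, ∑ i, A i m = lam := by
    intro m
    simp only [hAapp, Finset.sum_sub_distrib, ← Finset.mul_sum, hcolW m]
    simp [Finset.sum_ite_eq, mul_one]
  set u : Fin N → ℝ := fun _ => 1 with hu
  have h3 : Matrix.vecMul u A = lam • u := by
    funext m
    simp [Matrix.vecMul, dotProduct, hu, hcolA m]
  have h4 : Matrix.vecMul (lam • u) A⁻¹ = u := by
    rw [← h3, Matrix.vecMul_vecMul, Matrix.mul_nonsing_inv A hU, Matrix.vecMul_one]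
  have h5 : lam * ∑ i, A⁻¹ i j = 1 := by
    have h := congrFun h4 j
    simp only [Matrix.vecMul, dotProduct, Pi.smul_apply, smul_eq_mul, hu] at h
    rw [← h, Finset.mul_sum]
    exact Finset.sum_congr rfl fun i _ => by ring
  calc ∑ i, (lam • A⁻¹) i j = lam * ∑ i, A⁻¹ i j := by
        simp [Matrix.smul_apply, Finset.mul_sum]
    _ = 1 := h5


/-- With `W` symmetric doubly stochastic, `λ ∈ (0,1]`,
`L = λ(I − (1−λ)W)⁻¹`, `C = (1/N)·1·1ᵀ`, priors `θ` with mean zero and covariance `I`,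
outlier noise `v` supported on `ℳ` (|ℳ| = M), uncorrelated with `θ`, mean zero and
covariance `d·V`, and `θ̃ = θ + v`, the Friedkin–Johnsen consensus error satisfies
`E[‖Lθ̃ − Cθ‖²] = E[‖(L−C)θ̃‖²] + d·M/N ≥ d·M/N`, where `d·M/N = E[‖Cv‖²]` is the error
of standard consensus. -/
theorem FJ_error_vs_consensus_error_with_outliers
    (N : ℕ) (hN : 1 ≤ N)
    (W : Matrix (Fin N) (Fin N) ℝ)
    (hsymm : W.IsSymm)
    (hnonneg : ∀ i j, 0 ≤ W i j)
    (hrow : ∀ i, ∑ j, W i j = 1)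
    (lam : ℝ) (hlam : lam ∈ Set.Ioc (0 : ℝ) 1)
    (L C : Matrix (Fin N) (Fin N) ℝ)
    (hL : L = lam • (1 - (1 - lam) • W)⁻¹)
    (hC : C = Matrix.of fun _ _ => (N : ℝ)⁻¹)
    (Ω : Type*) [MeasurableSpace Ω] (μ : Measure Ω) [IsProbabilityMeasure μ]
    (θ v : Ω → Fin N → ℝ)
    (ℳ : Finset (Fin N)) (M : ℕ) (hM : M = ℳ.card)
    (d : ℝ) (hd : 0 ≤ d)
    (hθL2 : ∀ i, MemLp (fun ω => θ ω i) 2 μ)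
    (hvL2 : ∀ i, MemLp (fun ω => v ω i) 2 μ)
    (hθmean : ∀ i, ∫ ω, θ ω i ∂μ = 0)
    (hθcov : ∀ i j, ∫ ω, θ ω i * θ ω j ∂μ = if i = j then 1 else 0)
    (hvsupp : ∀ i ∉ ℳ, ∀ ω, v ω i = 0)
    (hvmean : ∀ i, ∫ ω, v ω i ∂μ = 0)
    (hvcov : ∀ i j, ∫ ω, v ω i * v ω j ∂μ = if i = j ∧ i ∈ ℳ then d else 0)
    (hcross : ∀ i j, ∫ ω, θ ω i * v ω j ∂μ = 0) :
    (∫ ω, ∑ i, (L.mulVec (θ ω + v ω) i - C.mulVec (θ ω) i) ^ 2 ∂μ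
        = (∫ ω, ∑ i, ((L - C).mulVec (θ ω + v ω) i) ^ 2 ∂μ) + d * M / N)
    ∧ d * M / N = ∫ ω, ∑ i, (C.mulVec (v ω) i) ^ 2 ∂μ
    ∧ d * M / N ≤ ∫ ω, ∑ i, (L.mulVec (θ ω + v ω) i - C.mulVec (θ ω) i) ^ 2 ∂μ := by
  obtain ⟨hlam0, hlam1⟩ := hlam
  have hNpos : (0:ℝ) < N := by exact_mod_cast hN
  have hNne : (N:ℝ) ≠ 0 := ne_of_gt hNpos
  have hcolL : ∀ j, ∑ i, L i j = 1 := fun j => by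
    rw [hL]; exact aux_colL W hsymm hnonneg hrow hlam0 hlam1 j
  have hcolC : ∀ j, ∑ i, C i j = 1 := by
    intro j
    simp [hC, Finset.sum_const, Finset.card_univ]
    field_simp
  have hcolLC : ∀ j, ∑ i, (L - C) i j = 0 := by
    intro j
    simp [Matrix.sub_apply, Finset.sum_sub_distrib, hcolL j, hcolC j]
  have htvL2 : ∀ j, MemLp (fun ω => (θ ω + v ω) j) 2 μ := fun j => by
    have := (hθL2 j).add (hvL2 j)
    exact this
  have hX2 : ∀ i, MemLp (fun ω => (L - C).mulVec (θ ω + v ω) i) 2 μ :=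
    fun i => aux_memLp_mulVec _ htvL2 i
  have hY2 : ∀ i, MemLp (fun ω => C.mulVec (v ω) i) 2 μ :=
    fun i => aux_memLp_mulVec _ hvL2 i
  have htv_cov : ∀ j k, ∫ ω, (θ ω + v ω) j * v ω k ∂μ
      = if j = k ∧ j ∈ ℳ then d else 0 := by
    intro j k
    have h1 : (fun ω => (θ ω + v ω) j * v ω k)
        = fun ω => θ ω j * v ω k + v ω j * v ω k := by
      funext ω; simp [Pi.add_apply]; ring
    rw [h1, integral_add (aux_int_mul (hθL2 j) (hvL2 k)) (aux_int_mul (hvL2 j) (hvL2 k)),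
      hcross j k, hvcov j k, zero_add]
  have htv_cov' : ∀ j k, ∫ ω, (θ ω j + v ω j) * v ω k ∂μ
      = if j = k ∧ j ∈ ℳ then d else 0 := fun j k => htv_cov j k
  -- cross term vanishes
  have hXY : ∫ ω, ∑ i, (L - C).mulVec (θ ω + v ω) i * C.mulVec (v ω) i ∂μ = 0 := by
    rw [integral_finset_sum _ (fun i _ => aux_int_mul (hX2 i) (hY2 i))]
    have hterm : ∀ i : Fin N, ∫ ω, (L - C).mulVec (θ ω + v ω) i * C.mulVec (v ω) i ∂μ
        = ∑ j, if j ∈ ℳ then (L - C) i j * C i j * d else 0 := by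
      intro i
      have he : (fun ω => (L - C).mulVec (θ ω + v ω) i * C.mulVec (v ω) i)
          = fun ω => (∑ j, (L - C) i j * (θ ω + v ω) j) * (∑ k, C i k * v ω k) := by
        funext ω; simp [Matrix.mulVec, dotProduct]
      rw [he, aux_cov_expand htvL2 hvL2 _ _]
      refine Finset.sum_congr rfl fun j _ => ?_
      by_cases hj : j ∈ ℳ
      · simp [htv_cov', hj, mul_ite, Finset.sum_ite_eq]
      · simp [htv_cov', hj]
    rw [Finset.sum_congr rfl (fun i _ => hterm i), Finset.sum_comm]
    refine Finset.sum_eq_zero fun j _ => ?_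
    by_cases hj : j ∈ ℳ
    · simp only [if_pos hj]
      have hterm2 : ∀ i : Fin N, (L - C) i j * C i j * d = (L - C) i j * ((N:ℝ)⁻¹ * d) := by
        intro i; rw [hC]; simp [Matrix.of_apply]; ring
      rw [Finset.sum_congr rfl (fun i _ => hterm2 i), ← Finset.sum_mul, hcolLC j, zero_mul]
    · simp [hj]
  -- consensus error term
  have hYY : ∫ ω, ∑ i, (C.mulVec (v ω) i) ^ 2 ∂μ = d * M / N := by
    rw [integral_finset_sum _ (fun i _ => by
      simpa [sq] using aux_int_mul (hY2 i) (hY2 i))]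
    have hterm : ∀ i : Fin N, ∫ ω, (C.mulVec (v ω) i) ^ 2 ∂μ
        = (M:ℝ) * ((N:ℝ)⁻¹ * (N:ℝ)⁻¹ * d) := by
      intro i
      have he : (fun ω => (C.mulVec (v ω) i) ^ 2)
          = fun ω => (∑ j, C i j * v ω j) * (∑ k, C i k * v ω k) := by
        funext ω; simp [Matrix.mulVec, dotProduct, sq]
      rw [he, aux_cov_expand hvL2 hvL2 _ _]
      have h2 : ∀ j : Fin N, ∑ k, C i j * C i k * ∫ ω, v ω j * v ω k ∂μ
          = if j ∈ ℳ then (N:ℝ)⁻¹ * (N:ℝ)⁻¹ * d else 0 := by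
        intro j
        by_cases hj : j ∈ ℳ
        · simp [hvcov, hj, mul_ite, Finset.sum_ite_eq, hC, Matrix.of_apply]
        · simp [hvcov, hj]
      rw [Finset.sum_congr rfl (fun j _ => h2 j)]
      rw [Finset.sum_ite_mem, Finset.univ_inter, Finset.sum_const, hM]
      simp [nsmul_eq_mul]
    rw [Finset.sum_congr rfl (fun i _ => hterm i), Finset.sum_const, Finset.card_univ,
      Fintype.card_fin, nsmul_eq_mul]
    field_simp
  -- pointwise decomposition
  have hpt : ∀ (ω : Ω) (i : Fin N), L.mulVec (θ ω + v ω) i - C.mulVec (θ ω) i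
      = (L - C).mulVec (θ ω + v ω) i + C.mulVec (v ω) i := by
    intro ω i
    simp only [Matrix.mulVec, dotProduct, Matrix.sub_apply, Pi.add_apply, sub_mul, mul_add,
      Finset.sum_sub_distrib, Finset.sum_add_distrib]
    ring
  have hsq : (fun ω => ∑ i, (L.mulVec (θ ω + v ω) i - C.mulVec (θ ω) i) ^ 2)
      = fun ω => (∑ i, ((L - C).mulVec (θ ω + v ω) i) ^ 2)
        + ((∑ i, 2 * ((L - C).mulVec (θ ω + v ω) i * C.mulVec (v ω) i))
          + ∑ i, (C.mulVec (v ω) i) ^ 2) := by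
    funext ω
    rw [← Finset.sum_add_distrib, ← Finset.sum_add_distrib]
    refine Finset.sum_congr rfl fun i _ => ?_
    rw [hpt ω i]; ring
  have hiX : Integrable (fun ω => ∑ i, ((L - C).mulVec (θ ω + v ω) i) ^ 2) μ :=
    integrable_finset_sum _ fun i _ => by simpa [sq] using aux_int_mul (hX2 i) (hX2 i)
  have hiY : Integrable (fun ω => ∑ i, (C.mulVec (v ω) i) ^ 2) μ :=
    integrable_finset_sum _ fun i _ => by simpa [sq] using aux_int_mul (hY2 i) (hY2 i)
  have hiXY : Integrable
      (fun ω => ∑ i, 2 * ((L - C).mulVec (θ ω + v ω) i * C.mulVec (v ω) i)) μ :=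
    integrable_finset_sum _ fun i _ => (aux_int_mul (hX2 i) (hY2 i)).const_mul 2
  have hXY2 : ∫ ω, ∑ i, 2 * ((L - C).mulVec (θ ω + v ω) i * C.mulVec (v ω) i) ∂μ = 0 := by
    have he : (fun ω => ∑ i, 2 * ((L - C).mulVec (θ ω + v ω) i * C.mulVec (v ω) i))
        = fun ω => 2 * ∑ i, (L - C).mulVec (θ ω + v ω) i * C.mulVec (v ω) i := by
      funext ω; rw [Finset.mul_sum]
    rw [he, integral_const_mul, hXY, mul_zero]
  have hmain : ∫ ω, ∑ i, (L.mulVec (θ ω + v ω) i - C.mulVec (θ ω) i) ^ 2 ∂μ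
      = (∫ ω, ∑ i, ((L - C).mulVec (θ ω + v ω) i) ^ 2 ∂μ) + d * M / N := by
    have hiYZ : Integrable (fun ω =>
        (∑ i, 2 * ((L - C).mulVec (θ ω + v ω) i * C.mulVec (v ω) i))
          + ∑ i, (C.mulVec (v ω) i) ^ 2) μ := hiXY.add hiY
    rw [hsq, integral_add hiX hiYZ, integral_add hiXY hiY, hXY2, hYY, zero_add]
  refine ⟨hmain, hYY.symm, ?_⟩
  rw [hmain]
  have : 0 ≤ ∫ ω, ∑ i, ((L - C).mulVec (θ ω + v ω) i) ^ 2 ∂μ :=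
    integral_nonneg fun ω => Finset.sum_nonneg fun i _ => sq_nonneg _
  linarith
end

section
/- Let ℛ and ℳ be disjoint finite sets with |ℛ| = R ≥ 1 and |ℳ| = M ≥ 1. Let (θ_i)_{i∈ℛ∪ℳ} be pairwise uncorrelated real random variables with mean 0 and variance 1, and (v_m)_{m∈ℳ} pairwise uncorrelated with mean 0 and variance d ≥ 0, uncorrelated with all θ_i. Let θ̄_ℳ := (1/M)·Σ_{m∈ℳ}(θ_m + v_m) and θ̄_ℛ := (1/R)·Σ_{i∈ℛ}θ_i. If d > M·(1 − 2/R) − 1, then E[Σ_{i∈ℛ}(θ̄_ℳ − θ̄_ℛ)²] > E[Σ_{i∈ℛ}(θ_i − θ̄_ℛ)²]; that is, in the presence of malicious agents with sufficiently large noise intensity, the standard consensus protocol yields strictly larger consensus error than the Friedkin–Johnsen dynamics with λ = 1. -/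
open MeasureTheory

section Aux

variable {Ω : Type*} [MeasurableSpace Ω] {μ : Measure Ω}

private lemma memL2_mul_integrable {f g : Ω → ℝ} (hf : MemLp f 2 μ) (hg : MemLp g 2 μ) :
    Integrable (fun ω => f ω * g ω) μ := by
  have h := L2.integrable_inner (𝕜 := ℝ) (hf.toLp f) (hg.toLp g)
  refine h.congr ?_
  filter_upwards [hf.coeFn_toLp, hg.coeFn_toLp] with ω h1 h2
  simp [h1, h2, RCLike.inner_apply, mul_comm]

private lemma integral_sum_mul_sum {ι κ : Type*} (s : Finset ι) (t : Finset κ)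
    (f : ι → Ω → ℝ) (g : κ → Ω → ℝ)
    (hf : ∀ i ∈ s, MemLp (f i) 2 μ) (hg : ∀ j ∈ t, MemLp (g j) 2 μ) :
    ∫ ω, (∑ i ∈ s, f i ω) * (∑ j ∈ t, g j ω) ∂μ
      = ∑ i ∈ s, ∑ j ∈ t, ∫ ω, f i ω * g j ω ∂μ := by
  have hint : ∀ i ∈ s, ∀ j ∈ t, Integrable (fun ω => f i ω * g j ω) μ :=
    fun i hi j hj => memL2_mul_integrable (hf i hi) (hg j hj)
  simp_rw [Finset.sum_mul_sum]
  rw [integral_finset_sum _ (fun i hi => integrable_finset_sum _ (hint i hi))]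
  exact Finset.sum_congr rfl fun i hi => integral_finset_sum _ (hint i hi)

end Aux

/-- With disjoint `ℛ` (`|ℛ| = R ≥ 1`) and `ℳ` (`|ℳ| = M ≥ 1`), priors
pairwise uncorrelated with mean `0` and variance `1`, noises pairwise uncorrelated with
mean `0` and variance `d ≥ 0` and uncorrelated with the priors: if
`d > M·(1 − 2/R) − 1`, then the consensus-protocol error
`E[Σ_{i∈ℛ}(θ̄_ℳ − θ̄_ℛ)²]` is strictly larger than the error
`E[Σ_{i∈ℛ}(θ i − θ̄_ℛ)²]` of the Friedkin–Johnsen dynamics with `λ = 1`. -/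
theorem consensus_worse_than_FJ_full_competition
    (ι : Type*) [DecidableEq ι] (ℛ ℳ : Finset ι) (hdisj : Disjoint ℛ ℳ)
    (R M : ℕ) (hR : R = ℛ.card) (hM : M = ℳ.card) (hR1 : 1 ≤ R) (hM1 : 1 ≤ M)
    (Ω : Type*) [MeasurableSpace Ω] (μ : Measure Ω) [IsProbabilityMeasure μ]
    (θ v : ι → Ω → ℝ) (d : ℝ) (hd : 0 ≤ d)
    (hθL2 : ∀ i ∈ ℛ ∪ ℳ, MemLp (θ i) 2 μ)
    (hvL2 : ∀ m ∈ ℳ, MemLp (v m) 2 μ)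
    (hθmean : ∀ i ∈ ℛ ∪ ℳ, ∫ ω, θ i ω ∂μ = 0)
    (hθvar : ∀ i ∈ ℛ ∪ ℳ, ∫ ω, (θ i ω) ^ 2 ∂μ = 1)
    (hθuncorr : ∀ i ∈ ℛ ∪ ℳ, ∀ j ∈ ℛ ∪ ℳ, i ≠ j → ∫ ω, θ i ω * θ j ω ∂μ = 0)
    (hvmean : ∀ m ∈ ℳ, ∫ ω, v m ω ∂μ = 0)
    (hvvar : ∀ m ∈ ℳ, ∫ ω, (v m ω) ^ 2 ∂μ = d)
    (hvuncorr : ∀ m ∈ ℳ, ∀ m' ∈ ℳ, m ≠ m' → ∫ ω, v m ω * v m' ω ∂μ = 0)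
    (hcross : ∀ i ∈ ℛ ∪ ℳ, ∀ m ∈ ℳ, ∫ ω, θ i ω * v m ω ∂μ = 0)
    (hnoise : d > (M : ℝ) * (1 - 2 / R) - 1) :
    (∫ ω, ∑ i ∈ ℛ, (θ i ω - (R : ℝ)⁻¹ * (∑ j ∈ ℛ, θ j ω)) ^ 2 ∂μ)
      < ∫ ω, ∑ _i ∈ ℛ,
          ((M : ℝ)⁻¹ * (∑ m ∈ ℳ, (θ m ω + v m ω)) - (R : ℝ)⁻¹ * (∑ j ∈ ℛ, θ j ω)) ^ 2 ∂μ := by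
  have hRpos : (0 : ℝ) < R := by exact_mod_cast Nat.lt_of_lt_of_le Nat.zero_lt_one hR1
  have hMpos : (0 : ℝ) < M := by exact_mod_cast Nat.lt_of_lt_of_le Nat.zero_lt_one hM1
  have hRne : (R : ℝ) ≠ 0 := ne_of_gt hRpos
  have hMne : (M : ℝ) ≠ 0 := ne_of_gt hMpos
  have hθR : ∀ j ∈ ℛ, MemLp (θ j) 2 μ := fun j hj => hθL2 j (Finset.mem_union_left _ hj)
  -- the ℒ² norm of each θ-linear combination
  -- LHS: each summand integrates to 1 - 1/R
  have hLi : ∀ i ∈ ℛ,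
      ∫ ω, (θ i ω - (R : ℝ)⁻¹ * (∑ j ∈ ℛ, θ j ω)) ^ 2 ∂μ = 1 - 1 / R := by
    intro i hi
    set c : ι → ℝ := fun j => (if j = i then (1 : ℝ) else 0) - (R : ℝ)⁻¹ with hc
    have hrw : ∀ ω, θ i ω - (R : ℝ)⁻¹ * (∑ j ∈ ℛ, θ j ω)
        = ∑ j ∈ ℛ, c j * θ j ω := by
      intro ω
      simp [hc, sub_mul, Finset.sum_sub_distrib, ite_mul, Finset.sum_ite_eq', hi,
        Finset.mul_sum]
    have hfL2 : ∀ j ∈ ℛ, MemLp (fun ω => c j * θ j ω) 2 μ :=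
      fun j hj => (hθR j hj).const_mul _
    simp_rw [hrw, sq]
    rw [integral_sum_mul_sum ℛ ℛ _ _ hfL2 hfL2]
    have hterm : ∀ j ∈ ℛ, ∑ k ∈ ℛ, ∫ ω, (c j * θ j ω) * (c k * θ k ω) ∂μ = c j ^ 2 := by
      intro j hj
      rw [Finset.sum_eq_single j]
      · have : ∀ ω, (c j * θ j ω) * (c j * θ j ω) = (c j * c j) * (θ j ω) ^ 2 :=
          fun ω => by ring
        simp_rw [this]
        rw [integral_const_mul, hθvar j (Finset.mem_union_left _ hj)]
        ring
      · intro k hk hkj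
        have : ∀ ω, (c j * θ j ω) * (c k * θ k ω) = (c j * c k) * (θ j ω * θ k ω) :=
          fun ω => by ring
        simp_rw [this]
        rw [integral_const_mul,
          hθuncorr j (Finset.mem_union_left _ hj) k (Finset.mem_union_left _ hk)
            (fun h => hkj (h.symm)), mul_zero]
      · exact fun h => absurd hj h
    rw [Finset.sum_congr rfl hterm]
    have hc2 : ∀ j, c j ^ 2
        = (if j = i then (1 : ℝ) else 0) - 2 * (R : ℝ)⁻¹ * (if j = i then (1 : ℝ) else 0)
          + (R : ℝ)⁻¹ ^ 2 := by
      intro j; by_cases h : j = i <;> simp [hc, h] <;> ring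
    rw [Finset.sum_congr rfl fun j _ => hc2 j]
    simp only [Finset.sum_add_distrib, Finset.sum_sub_distrib, ← Finset.mul_sum,
      Finset.sum_ite_eq', if_pos hi, Finset.sum_const, ← hR, nsmul_eq_mul]
    field_simp
    ring
  -- RHS: each summand integrates to 1/R + (1+d)/M
  set g : ι → Ω → ℝ := fun j ω =>
    if j ∈ ℳ then (M : ℝ)⁻¹ * (θ j ω + v j ω) else -(R : ℝ)⁻¹ * θ j ω with hgdef
  have hnotM : ∀ j ∈ ℛ, j ∉ ℳ := fun j hj => Finset.disjoint_left.mp hdisj hj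
  have hgM : ∀ j ∈ ℳ, g j = fun ω => (M : ℝ)⁻¹ * (θ j ω + v j ω) := by
    intro j hj; funext ω; simp [hgdef, hj]
  have hgR : ∀ j ∈ ℛ, g j = fun ω => -(R : ℝ)⁻¹ * θ j ω := by
    intro j hj; funext ω; simp [hgdef, hnotM j hj]
  have hgL2 : ∀ j ∈ ℛ ∪ ℳ, MemLp (g j) 2 μ := by
    intro j hj
    rcases Finset.mem_union.mp hj with h | h
    · rw [hgR j h]; exact (hθR j h).const_mul _
    · rw [hgM j h]; exact ((hθL2 j (Finset.mem_union_right _ h)).add (hvL2 j h)).const_mul _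
  have hsum : ∀ ω, (M : ℝ)⁻¹ * (∑ m ∈ ℳ, (θ m ω + v m ω))
      - (R : ℝ)⁻¹ * (∑ j ∈ ℛ, θ j ω) = ∑ j ∈ ℛ ∪ ℳ, g j ω := by
    intro ω
    rw [Finset.sum_union hdisj,
      Finset.sum_congr rfl fun j hj => congrFun (hgR j hj) ω,
      Finset.sum_congr rfl fun j hj => congrFun (hgM j hj) ω,
      ← Finset.mul_sum, ← Finset.mul_sum]
    ring
  have hprod : ∀ j ∈ ℛ ∪ ℳ, ∀ k ∈ ℛ ∪ ℳ, ∫ ω, g j ω * g k ω ∂μ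
      = if j = k then (if j ∈ ℳ then (1 + d) / (M : ℝ) ^ 2 else (R : ℝ)⁻¹ ^ 2) else 0 := by
    intro j hj k hk
    have intθθ : ∀ a ∈ ℛ ∪ ℳ, ∀ b ∈ ℛ ∪ ℳ, Integrable (fun ω => θ a ω * θ b ω) μ :=
      fun a ha b hb => memL2_mul_integrable (hθL2 a ha) (hθL2 b hb)
    have intθv : ∀ a ∈ ℛ ∪ ℳ, ∀ b ∈ ℳ, Integrable (fun ω => θ a ω * v b ω) μ :=
      fun a ha b hb => memL2_mul_integrable (hθL2 a ha) (hvL2 b hb)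
    have intvv : ∀ a ∈ ℳ, ∀ b ∈ ℳ, Integrable (fun ω => v a ω * v b ω) μ :=
      fun a ha b hb => memL2_mul_integrable (hvL2 a ha) (hvL2 b hb)
    by_cases hjk : j = k
    · subst hjk
      rw [if_pos rfl]
      by_cases hm : j ∈ ℳ
      · rw [if_pos hm, hgM j hm]
        have hju : j ∈ ℛ ∪ ℳ := Finset.mem_union_right _ hm
        have : ∀ ω, ((M : ℝ)⁻¹ * (θ j ω + v j ω)) * ((M : ℝ)⁻¹ * (θ j ω + v j ω))
            = (M : ℝ)⁻¹ * (M : ℝ)⁻¹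
              * ((θ j ω) ^ 2 + (θ j ω * v j ω + (θ j ω * v j ω + (v j ω) ^ 2))) :=
          fun ω => by ring
        simp_rw [this]
        have i3 : Integrable (fun ω => θ j ω * v j ω + (v j ω) ^ 2) μ :=
          (intθv j hju j hm).add (hvL2 j hm).integrable_sq
        have i2 : Integrable (fun ω => θ j ω * v j ω + (θ j ω * v j ω + (v j ω) ^ 2)) μ :=
          (intθv j hju j hm).add i3
        rw [integral_const_mul,
          integral_add (hθL2 j hju).integrable_sq i2,
          integral_add (intθv j hju j hm) i3,
          integral_add (intθv j hju j hm) (hvL2 j hm).integrable_sq,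
          hθvar j hju, hcross j hju j hm, hvvar j hm]
        rw [eq_div_iff (pow_ne_zero 2 hMne)]
        field_simp
        ring
      · have hr : j ∈ ℛ := (Finset.mem_union.mp hj).resolve_right hm
        rw [if_neg hm, hgR j hr]
        have : ∀ ω, (-(R : ℝ)⁻¹ * θ j ω) * (-(R : ℝ)⁻¹ * θ j ω)
            = ((R : ℝ)⁻¹ * (R : ℝ)⁻¹) * (θ j ω) ^ 2 := fun ω => by ring
        simp_rw [this]
        rw [integral_const_mul, hθvar j hj]
        ring
    · rw [if_neg hjk]
      by_cases hmj : j ∈ ℳ <;> by_cases hmk : k ∈ ℳ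
      · -- both malicious
        rw [hgM j hmj, hgM k hmk]
        have hju : j ∈ ℛ ∪ ℳ := Finset.mem_union_right _ hmj
        have hku : k ∈ ℛ ∪ ℳ := Finset.mem_union_right _ hmk
        have : ∀ ω, ((M : ℝ)⁻¹ * (θ j ω + v j ω)) * ((M : ℝ)⁻¹ * (θ k ω + v k ω))
            = (M : ℝ)⁻¹ * (M : ℝ)⁻¹
              * (θ j ω * θ k ω + (θ j ω * v k ω + (θ k ω * v j ω + v j ω * v k ω))) :=
          fun ω => by ring
        simp_rw [this]
        have i3 : Integrable (fun ω => θ k ω * v j ω + v j ω * v k ω) μ :=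
          (intθv k hku j hmj).add (intvv j hmj k hmk)
        have i2 : Integrable (fun ω => θ j ω * v k ω + (θ k ω * v j ω + v j ω * v k ω)) μ :=
          (intθv j hju k hmk).add i3
        rw [integral_const_mul,
          integral_add (intθθ j hju k hku) i2,
          integral_add (intθv j hju k hmk) i3,
          integral_add (intθv k hku j hmj) (intvv j hmj k hmk),
          hθuncorr j hju k hku hjk, hcross j hju k hmk, hcross k hku j hmj,
          hvuncorr j hmj k hmk hjk]
        ring
      · -- j malicious, k regular
        have hr : k ∈ ℛ := (Finset.mem_union.mp hk).resolve_right hmk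
        rw [hgM j hmj, hgR k hr]
        have hju : j ∈ ℛ ∪ ℳ := Finset.mem_union_right _ hmj
        have hku : k ∈ ℛ ∪ ℳ := Finset.mem_union_left _ hr
        have : ∀ ω, ((M : ℝ)⁻¹ * (θ j ω + v j ω)) * (-(R : ℝ)⁻¹ * θ k ω)
            = (-((M : ℝ)⁻¹ * (R : ℝ)⁻¹)) * (θ j ω * θ k ω + θ k ω * v j ω) :=
          fun ω => by ring
        simp_rw [this]
        rw [integral_const_mul, integral_add (intθθ j hju k hku) (intθv k hku j hmj),
          hθuncorr j hju k hku hjk, hcross k hku j hmj]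
        ring
      · -- j regular, k malicious
        have hr : j ∈ ℛ := (Finset.mem_union.mp hj).resolve_right hmj
        rw [hgR j hr, hgM k hmk]
        have hju : j ∈ ℛ ∪ ℳ := Finset.mem_union_left _ hr
        have hku : k ∈ ℛ ∪ ℳ := Finset.mem_union_right _ hmk
        have : ∀ ω, (-(R : ℝ)⁻¹ * θ j ω) * ((M : ℝ)⁻¹ * (θ k ω + v k ω))
            = (-((M : ℝ)⁻¹ * (R : ℝ)⁻¹)) * (θ j ω * θ k ω + θ j ω * v k ω) :=
          fun ω => by ring
        simp_rw [this]
        rw [integral_const_mul, integral_add (intθθ j hju k hku) (intθv j hju k hmk),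
          hθuncorr j hju k hku hjk, hcross j hju k hmk]
        ring
      · -- both regular
        have hrj : j ∈ ℛ := (Finset.mem_union.mp hj).resolve_right hmj
        have hrk : k ∈ ℛ := (Finset.mem_union.mp hk).resolve_right hmk
        rw [hgR j hrj, hgR k hrk]
        have : ∀ ω, (-(R : ℝ)⁻¹ * θ j ω) * (-(R : ℝ)⁻¹ * θ k ω)
            = ((R : ℝ)⁻¹ * (R : ℝ)⁻¹) * (θ j ω * θ k ω) := fun ω => by ring
        simp_rw [this]
        rw [integral_const_mul, hθuncorr j hj k hk hjk, mul_zero]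
  have hIR : ∫ ω, ((M : ℝ)⁻¹ * (∑ m ∈ ℳ, (θ m ω + v m ω))
      - (R : ℝ)⁻¹ * (∑ j ∈ ℛ, θ j ω)) ^ 2 ∂μ = 1 / R + (1 + d) / M := by
    simp_rw [hsum, sq]
    rw [integral_sum_mul_sum _ _ _ _ hgL2 hgL2]
    rw [Finset.sum_congr rfl fun j hj => Finset.sum_congr rfl fun k hk => hprod j hj k hk]
    have hinner : ∀ j ∈ ℛ ∪ ℳ, (∑ k ∈ ℛ ∪ ℳ,
        if j = k then (if j ∈ ℳ then (1 + d) / (M : ℝ) ^ 2 else (R : ℝ)⁻¹ ^ 2) else 0)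
        = (if j ∈ ℳ then (1 + d) / (M : ℝ) ^ 2 else (R : ℝ)⁻¹ ^ 2) := by
      intro j hj
      rw [Finset.sum_ite_eq, if_pos hj]
    rw [Finset.sum_congr rfl hinner, Finset.sum_union hdisj]
    have h1 : ∑ j ∈ ℛ, (if j ∈ ℳ then (1 + d) / (M : ℝ) ^ 2 else (R : ℝ)⁻¹ ^ 2)
        = (R : ℝ) * (R : ℝ)⁻¹ ^ 2 := by
      rw [Finset.sum_congr rfl fun j hj => if_neg (hnotM j hj), Finset.sum_const, ← hR,
        nsmul_eq_mul]
    have h2 : ∑ j ∈ ℳ, (if j ∈ ℳ then (1 + d) / (M : ℝ) ^ 2 else (R : ℝ)⁻¹ ^ 2)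
        = (M : ℝ) * ((1 + d) / (M : ℝ) ^ 2) := by
      rw [Finset.sum_congr rfl fun j hj => if_pos hj, Finset.sum_const, ← hM, nsmul_eq_mul]
    rw [h1, h2]
    field_simp
  -- integrability of the summands, to pull the finite sums out of the integrals
  have hintL : ∀ i ∈ ℛ, Integrable
      (fun ω => (θ i ω - (R : ℝ)⁻¹ * (∑ j ∈ ℛ, θ j ω)) ^ 2) μ := by
    intro i hi
    have hS : MemLp (fun ω => ∑ j ∈ ℛ, θ j ω) 2 μ := memLp_finset_sum ℛ hθR
    exact ((hθR i hi).sub (hS.const_mul _)).integrable_sq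
  have hintR : ∀ i ∈ ℛ, Integrable (fun ω => ((M : ℝ)⁻¹ * (∑ m ∈ ℳ, (θ m ω + v m ω))
      - (R : ℝ)⁻¹ * (∑ j ∈ ℛ, θ j ω)) ^ 2) μ := by
    intro i _
    have hS : MemLp (fun ω => ∑ j ∈ ℛ, θ j ω) 2 μ := memLp_finset_sum ℛ hθR
    have hT : MemLp (fun ω => ∑ m ∈ ℳ, (θ m ω + v m ω)) 2 μ :=
      memLp_finset_sum ℳ fun m hm =>
        (hθL2 m (Finset.mem_union_right _ hm)).add (hvL2 m hm)
    exact ((hT.const_mul _).sub (hS.const_mul _)).integrable_sq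
  rw [integral_finset_sum _ hintL, integral_finset_sum _ hintR,
    Finset.sum_congr rfl hLi, Finset.sum_congr rfl fun i _ => hIR,
    Finset.sum_const, Finset.sum_const, ← hR, nsmul_eq_mul, nsmul_eq_mul]
  -- final numeric inequality
  have h2 : (1 : ℝ) - 2 / R < (1 + d) / M := by
    rw [lt_div_iff₀ hMpos]
    nlinarith [hnoise]
  have h3 : (1 : ℝ) - 1 / R < 1 / R + (1 + d) / M := by
    have : (2 : ℝ) / R = 1 / R + 1 / R := by ring
    linarith [h2]
  exact (mul_lt_mul_iff_right₀ hRpos).mpr h3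
end

section
/- With the malicious-agent setup, the trace appearing in the derivative of the consensus error at λ = 1 satisfies tr((I_N + d·V)·(I_N − Wᵀ)·Sᵀ·(I_R − C_R)·S) = Σ_{i∈ℛ} (1 − (1/R)·Σ_{m∈ℳ} W_{im}) for every d ≥ 0; each summand a_i = 1 − (1/R)·Σ_{m∈ℳ} W_{im} satisfies a_i ≥ 1 − 1/R > 0, so the trace is at least R − 1 > 0 and is independent of the noise intensity d. -/
open Matrix

/-- In the malicious-agent setup, the trace in the derivative of the
consensus error at `λ = 1` equals `Σ_{i∈ℛ} (1 − (1/R)·Σ_{m∈ℳ} W i m)` for every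
`d ≥ 0`; each summand is at least `1 − 1/R > 0`, so the trace is at least `R − 1 > 0`,
independently of the noise intensity `d`. -/
theorem error_derivative_trace_at_one
    (R M : ℕ) (hR : 2 ≤ R) (hM : 1 ≤ M)
    (W0 : Matrix (Fin R ⊕ Fin M) (Fin R ⊕ Fin M) ℝ)
    (hW0symm : W0.IsSymm)
    (hW0nonneg : ∀ i j, 0 ≤ W0 i j)
    (hW0row : ∀ i, ∑ j, W0 i j = 1)
    (hW0diag : ∀ i, W0 i i = 0)
    (hW0irr : ∀ i j, ∃ k : ℕ, 0 < (W0 ^ k) i j)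
    (W : Matrix (Fin R ⊕ Fin M) (Fin R ⊕ Fin M) ℝ)
    (hW : W = Matrix.fromBlocks W0.toBlocks₁₁ W0.toBlocks₁₂ 0 1)
    (hW12 : W0.toBlocks₁₂ ≠ 0)
    (L : ℝ → Matrix (Fin R ⊕ Fin M) (Fin R ⊕ Fin M) ℝ)
    (hL : ∀ lam : ℝ, L lam = lam • (1 - (1 - lam) • W)⁻¹)
    (S : Matrix (Fin R) (Fin R ⊕ Fin M) ℝ)
    (hS : S = Matrix.of fun i j => if j = Sum.inl i then 1 else 0)
    (CR : Matrix (Fin R) (Fin R) ℝ)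
    (hCR : CR = Matrix.of fun _ _ => (R : ℝ)⁻¹)
    (V : Matrix (Fin R ⊕ Fin M) (Fin R ⊕ Fin M) ℝ)
    (hV : V = Matrix.fromBlocks 0 0 0 1)
    (E : ℝ → Matrix (Fin R) (Fin R ⊕ Fin M) ℝ)
    (hE : ∀ lam : ℝ, E lam = S * L lam - CR * S)
    (e : ℝ → ℝ → ℝ)
    (he : ∀ (lam d : ℝ), e lam d = ((1 + d • V) * (E lam)ᵀ * E lam).trace)
    (d : ℝ) (hd : 0 ≤ d) :
    ((1 + d • V) * (1 - Wᵀ) * Sᵀ * (1 - CR) * S).trace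
        = ∑ i : Fin R, (1 - (R : ℝ)⁻¹ * ∑ m : Fin M, W (Sum.inl i) (Sum.inr m))
    ∧ (∀ i : Fin R,
        1 - (R : ℝ)⁻¹ ≤ 1 - (R : ℝ)⁻¹ * ∑ m : Fin M, W (Sum.inl i) (Sum.inr m))
    ∧ 0 < 1 - (R : ℝ)⁻¹
    ∧ (R : ℝ) - 1 ≤ ((1 + d • V) * (1 - Wᵀ) * Sᵀ * (1 - CR) * S).trace
    ∧ 0 < (R : ℝ) - 1 := by
  have hRpos : (0:ℝ) < R := by positivity
  have hR1 : (1:ℝ) < R := by exact_mod_cast lt_of_lt_of_le one_lt_two (by exact_mod_cast hR)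
  have hRinv : (R:ℝ)⁻¹ < 1 := by
    rw [inv_lt_one_iff₀]; right; exact hR1
  -- W at inl/inr entries equals W0
  have hWe : ∀ (i : Fin R) (m : Fin M), W (Sum.inl i) (Sum.inr m) = W0 (Sum.inl i) (Sum.inr m) := by
    intro i m; rw [hW]; rfl
  -- Trace expansion
  have htr : ((1 + d • V) * (1 - Wᵀ) * Sᵀ * (1 - CR) * S).trace
      = ∑ a : Fin R, ∑ b : Fin R,
        ((if a = b then 1 else 0) - W0 (Sum.inl b) (Sum.inl a)) * ((if b = a then 1 else 0) - (R:ℝ)⁻¹) := by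
    subst hW hS hCR hV
    simp [Matrix.trace, Matrix.mul_apply, Fintype.sum_sum_type, Matrix.one_apply,
      Matrix.fromBlocks, Matrix.sub_apply, Matrix.transpose_apply, Matrix.smul_apply,
      Matrix.toBlocks₁₁, Matrix.toBlocks₁₂, Finset.mul_sum, Finset.sum_mul,
      ite_mul, mul_ite, Finset.sum_ite_eq, Finset.sum_ite_eq']
  -- per-row identity
  have hrow : ∀ a : Fin R,
      ∑ b : Fin R,
        ((if a = b then 1 else 0) - W0 (Sum.inl b) (Sum.inl a)) * ((if b = a then 1 else 0) - (R:ℝ)⁻¹)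
      = 1 - (R : ℝ)⁻¹ * ∑ m : Fin M, W0 (Sum.inl a) (Sum.inr m) := by
    intro a
    have hsum : ∑ b : Fin R, W0 (Sum.inl b) (Sum.inl a)
        = 1 - ∑ m : Fin M, W0 (Sum.inl a) (Sum.inr m) := by
      have := hW0row (Sum.inl a)
      rw [Fintype.sum_sum_type] at this
      have hs : ∀ b : Fin R, W0 (Sum.inl b) (Sum.inl a) = W0 (Sum.inl a) (Sum.inl b) := by
        intro b; exact hW0symm.apply _ _
      simp only [hs]
      linarith
    have expand : ∀ b : Fin R,
        ((if a = b then 1 else 0) - W0 (Sum.inl b) (Sum.inl a)) * ((if b = a then 1 else 0) - (R:ℝ)⁻¹)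
        = (if a = b then (1:ℝ) else 0) - (if a = b then (R:ℝ)⁻¹ else 0)
          - (if b = a then W0 (Sum.inl b) (Sum.inl a) else 0)
          + (R:ℝ)⁻¹ * W0 (Sum.inl b) (Sum.inl a) := by
      intro b
      by_cases h : a = b <;> simp [h, eq_comm] <;> ring
    simp only [expand]
    rw [Finset.sum_add_distrib, Finset.sum_sub_distrib, Finset.sum_sub_distrib]
    simp only [Finset.sum_ite_eq, Finset.sum_ite_eq', Finset.mem_univ, if_true]
    rw [← Finset.mul_sum, hsum, hW0diag]
    ring_nf
  have hmain : ((1 + d • V) * (1 - Wᵀ) * Sᵀ * (1 - CR) * S).trace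
      = ∑ i : Fin R, (1 - (R : ℝ)⁻¹ * ∑ m : Fin M, W (Sum.inl i) (Sum.inr m)) := by
    rw [htr]
    refine Finset.sum_congr rfl fun a _ => ?_
    rw [hrow a]
    simp only [hWe]
  -- each summand bound
  have hsle : ∀ i : Fin R, ∑ m : Fin M, W0 (Sum.inl i) (Sum.inr m) ≤ 1 := by
    intro i
    have := hW0row (Sum.inl i)
    rw [Fintype.sum_sum_type] at this
    have h0 : 0 ≤ ∑ b : Fin R, W0 (Sum.inl i) (Sum.inl b) :=
      Finset.sum_nonneg fun b _ => hW0nonneg _ _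
    linarith
  have hbound : ∀ i : Fin R,
      1 - (R : ℝ)⁻¹ ≤ 1 - (R : ℝ)⁻¹ * ∑ m : Fin M, W (Sum.inl i) (Sum.inr m) := by
    intro i
    simp only [hWe]
    have := hsle i
    nlinarith [inv_pos.mpr hRpos]
  refine ⟨hmain, hbound, by linarith, ?_, by linarith⟩
  rw [hmain]
  calc (R:ℝ) - 1 = ∑ _i : Fin R, (1 - (R:ℝ)⁻¹) := by
        rw [Finset.sum_const, Finset.card_univ, Fintype.card_fin, nsmul_eq_mul]
        field_simp
    _ ≤ _ := Finset.sum_le_sum fun i _ => hbound i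
end

section
/- With the malicious-agent setup, for every fixed d ≥ 0 there exists ε ∈ (0,1) such that the function λ ↦ e(λ, d) is strictly increasing on the interval (1 − ε, 1]. Consequently, every λ* ∈ (0,1] that minimizes e(·, d) over (0,1] satisfies λ* < 1. -/
/-! The regularised resolvent `L t = t • (1 - (1 - t) • W)⁻¹` satisfies the exact identity
`L y - L x = (y - x) • ((1 - (1 - y) • W)⁻¹ * (1 - W) * (1 - (1 - x) • W)⁻¹)`, and the error
`e` is a quadratic form in `E = S L - C_R S`. Hence `e y - e x = (y - x) * Q x y` with `Q`
continuous near `(1, 1)`, and no derivative is needed. At `λ = 1` we have `L = 1`, the columns of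
`E 1` belonging to malicious agents vanish (so `d` drops out), and
`Q 1 1 = 2 tr((1 - W₁₁ᵀ)(1 - C_R)) = 2 (R - 1 + (1/R) ∑ᵢⱼ (W₁₁)ᵢⱼ) > 0`.
So `e` increases strictly on a neighbourhood of `1`, and `1` cannot be a minimiser. -/

open Matrix Filter Topology

theorem exists_strictMonoOn_ball_of_sub_eq_mul {f : ℝ → ℝ} {Q : ℝ → ℝ → ℝ} {a : ℝ}
    (hf : ∀ᶠ p in 𝓝 (a, a), f p.2 - f p.1 = (p.2 - p.1) * Q p.1 p.2)
    (hQ : ContinuousAt (Function.uncurry Q) (a, a)) (ha : 0 < Q a a) :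
    ∃ δ > 0, StrictMonoOn f (Metric.ball a δ) := by
  obtain ⟨δ, hδ, hball⟩ :=
    Metric.eventually_nhds_iff_ball.mp (hf.and (hQ.eventually_const_lt ha))
  refine ⟨δ, hδ, fun x hx y hy hxy => ?_⟩
  obtain ⟨hslope, hpos⟩ := hball (x, y) (by rw [← ball_prod_same]; exact ⟨hx, hy⟩)
  have : 0 < f y - f x := hslope ▸ mul_pos (sub_pos.2 hxy) hpos
  linarith

theorem exists_mem_Ioo_strictMonoOn_Ioc {f : ℝ → ℝ} {a δ c : ℝ} (hδ : 0 < δ) (hc : 0 < c)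
    (hf : StrictMonoOn f (Metric.ball a δ)) :
    ∃ ε ∈ Set.Ioo 0 c, StrictMonoOn f (Set.Ioc (a - ε) a) := by
  have hmin : 0 < min δ c := lt_min hδ hc
  refine ⟨min δ c / 2, ⟨by positivity, by linarith [min_le_right δ c]⟩, hf.mono ?_⟩
  intro x ⟨hxl, hxr⟩
  rw [Real.ball_eq_Ioo]
  constructor <;> linarith [min_le_left δ c]

theorem lt_of_strictMonoOn_Ioc_of_forall_le {f : ℝ → ℝ} {a b ε x : ℝ} (hε : 0 < ε)
    (hab : a ≤ b - ε) (hf : StrictMonoOn f (Set.Ioc (b - ε) b)) (hx : x ∈ Set.Ioc a b)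
    (hmin : ∀ y ∈ Set.Ioc a b, f x ≤ f y) : x < b := by
  refine hx.2.lt_of_ne fun hxb => ?_
  have hy : b - ε / 2 ∈ Set.Ioc (b - ε) b := ⟨by linarith, by linarith⟩
  have := hf hy ⟨by linarith, le_rfl⟩ (by linarith)
  have := hmin (b - ε / 2) ⟨by linarith, by linarith⟩
  subst hxb
  linarith

theorem trace_mul_transpose_mul_sub {m n R : Type*} [Fintype m] [Fintype n] [CommRing R]
    {C : Matrix n n R} (hC : C.IsSymm) (A B : Matrix m n R) :
    trace (C * Bᵀ * B) - trace (C * Aᵀ * A) = trace (C * (B - A)ᵀ * (B + A)) := by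
  have h : trace (C * Bᵀ * A) = trace (C * Aᵀ * B) := by
    rw [← trace_transpose, transpose_mul, transpose_mul, transpose_transpose, hC.eq,
      ← Matrix.mul_assoc, trace_mul_cycle]
  simp only [transpose_sub, Matrix.mul_sub, Matrix.sub_mul, Matrix.mul_add, trace_sub,
    trace_add, h]
  ring

theorem trace_one_sub_mul_one_sub_pos {ι : Type*} [Fintype ι] [DecidableEq ι]
    (hι : 2 ≤ Fintype.card ι) {A : Matrix ι ι ℝ} (hA : ∀ i j, 0 ≤ A i j)
    (hdiag : ∀ i, A i i = 0) :
    0 < trace ((1 - A) * (1 - of fun _ _ => (Fintype.card ι : ℝ)⁻¹)) := by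
  have hcard : (2 : ℝ) ≤ Fintype.card ι := by exact_mod_cast hι
  have hJ : trace (of fun _ _ => (Fintype.card ι : ℝ)⁻¹ : Matrix ι ι ℝ) = 1 := by
    simp [trace, (show (Fintype.card ι : ℝ) ≠ 0 by linarith)]
  have hA0 : trace A = 0 := by simp [trace, hdiag]
  have hAJ : 0 ≤ trace (A * of fun _ _ => (Fintype.card ι : ℝ)⁻¹) :=
    Finset.sum_nonneg fun i _ => Finset.sum_nonneg fun j _ =>
      mul_nonneg (hA i j) (inv_nonneg.2 (Nat.cast_nonneg _))
  rw [Matrix.sub_mul, Matrix.mul_sub, Matrix.mul_sub, trace_sub, trace_sub, trace_sub,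
    Matrix.one_mul, Matrix.mul_one, Matrix.one_mul, trace_one, hJ, hA0]
  linarith

theorem fromCols_one_zero_mul_mul_transpose {m n R : Type*} [Fintype m] [Fintype n]
    [DecidableEq m] [Semiring R] (X : Matrix (m ⊕ n) (m ⊕ n) R) :
    fromCols (1 : Matrix m m R) (0 : Matrix m n R) * X * (fromCols 1 0 : Matrix m (m ⊕ n) R)ᵀ
      = X.toBlocks₁₁ := by
  ext i j
  simp [mul_apply, one_apply, toBlocks₁₁]

theorem smul_inv_sub_smul_inv {n K : Type*} [Fintype n] [DecidableEq n] [CommRing K]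
    (W : Matrix n n K) {s t : K} (hs : IsUnit (1 - (1 - s) • W).det)
    (ht : IsUnit (1 - (1 - t) • W).det) :
    s • (1 - (1 - s) • W)⁻¹ - t • (1 - (1 - t) • W)⁻¹
      = (s - t) • ((1 - (1 - s) • W)⁻¹ * (1 - W) * (1 - (1 - t) • W)⁻¹) := by
  have key : (s - t) • (1 - W) = s • (1 - (1 - t) • W) - t • (1 - (1 - s) • W) := by module
  rw [← Matrix.smul_mul, ← Matrix.mul_smul, key, Matrix.mul_sub, Matrix.sub_mul,
    Matrix.mul_smul, Matrix.mul_smul, Matrix.smul_mul, Matrix.smul_mul, nonsing_inv_mul _ hs,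
    Matrix.mul_assoc, mul_nonsing_inv _ ht, Matrix.one_mul, Matrix.mul_one]

section Resolvent

variable {n : Type*} [Fintype n] [DecidableEq n] (W : Matrix n n ℝ)

theorem eventually_isUnit_det_one_sub_smul :
    ∀ᶠ t in 𝓝 (1 : ℝ), IsUnit (1 - (1 - t) • W).det := by
  have hdet : ContinuousAt (fun t : ℝ => (1 - (1 - t) • W).det) 1 := by fun_prop
  filter_upwards [hdet.eventually_ne (by simp : (1 - (1 - 1 : ℝ) • W).det ≠ 0)] with t ht
    using isUnit_iff_ne_zero.2 ht

theorem continuousAt_inv_one_sub_smul :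
    ContinuousAt (fun t : ℝ => (1 - (1 - t) • W)⁻¹) 1 := by
  refine (continuousAt_matrix_inv _ ?_).comp (by fun_prop)
  simp only [sub_self, zero_smul, sub_zero, det_one, Ring.inverse_eq_inv']
  exact continuousAt_inv₀ one_ne_zero

theorem exists_strictMonoOn_ball_trace_mul_transpose_mul {m : Type*} [Fintype m]
    {C : Matrix n n ℝ} (hC : C.IsSymm) {S B : Matrix m n ℝ} {E : ℝ → Matrix m n ℝ}
    (hE : ∀ t, E t = S * (t • (1 - (1 - t) • W)⁻¹) - B)
    (hpos : 0 < trace (C * (S * (1 - W))ᵀ * (S - B))) :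
    ∃ δ > 0, StrictMonoOn (fun t => trace (C * (E t)ᵀ * E t)) (Metric.ball 1 δ) := by
  have hu := continuousAt_inv_one_sub_smul W
  have hu₁ : ContinuousAt (fun p : ℝ × ℝ => (1 - (1 - p.1) • W)⁻¹) (1, 1) :=
    hu.comp_of_eq continuousAt_fst rfl
  have hu₂ : ContinuousAt (fun p : ℝ × ℝ => (1 - (1 - p.2) • W)⁻¹) (1, 1) :=
    hu.comp_of_eq continuousAt_snd rfl
  refine exists_strictMonoOn_ball_of_sub_eq_mul
    (Q := fun x y => trace (C * (S * ((1 - (1 - y) • W)⁻¹ * (1 - W) * (1 - (1 - x) • W)⁻¹))ᵀ *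
      (E y + E x))) ?_ ?_ ?_
  · have h := eventually_isUnit_det_one_sub_smul W
    filter_upwards [h.prod_nhds h] with ⟨x, y⟩ ⟨hx, hy⟩
    have hdiff : E y - E x =
        (y - x) • (S * ((1 - (1 - y) • W)⁻¹ * (1 - W) * (1 - (1 - x) • W)⁻¹)) := by
      rw [hE, hE, sub_sub_sub_cancel_right, ← Matrix.mul_sub, smul_inv_sub_smul_inv W hy hx,
        Matrix.mul_smul]
    rw [trace_mul_transpose_mul_sub hC, hdiff, transpose_smul, Matrix.mul_smul, Matrix.smul_mul,
      trace_smul, smul_eq_mul]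
  · simp only [hE]
    fun_prop
  · have hE1 : E 1 = S - B := by simp [hE]
    simp only [hE1, sub_self, zero_smul, sub_zero, inv_one, Matrix.mul_one, Matrix.one_mul,
      ← two_smul ℝ (S - B), Matrix.mul_smul, trace_smul, smul_eq_mul]
    positivity

end Resolvent

theorem trace_mul_transpose_mul_sub_mul_pos {m n : Type*} [Fintype m] [Fintype n]
    [DecidableEq m] [DecidableEq n] (hm : 2 ≤ Fintype.card m) {W : Matrix (m ⊕ n) (m ⊕ n) ℝ}
    (hW : ∀ i j, 0 ≤ W (.inl i) (.inl j)) (hdiag : ∀ i, W (.inl i) (.inl i) = 0)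
    {S : Matrix m (m ⊕ n) ℝ} (hS : S = fromCols 1 0) {C : Matrix (m ⊕ n) (m ⊕ n) ℝ}
    (hSC : S * C = S) {J : Matrix m m ℝ} (hJ : J = of fun _ _ => (Fintype.card m : ℝ)⁻¹) :
    0 < trace (C * (S * (1 - W))ᵀ * (S - J * S)) :=
  calc 0 < trace ((1 - W.toBlocks₁₁ᵀ) * (1 - J)) :=
        hJ ▸ trace_one_sub_mul_one_sub_pos hm (fun i j => hW j i) hdiag
    _ = trace (S * (1 - W)ᵀ * Sᵀ * (1 - J)) := by
        rw [hS, fromCols_one_zero_mul_mul_transpose]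
        congr 2
        ext i j
        simp [toBlocks₁₁, one_apply, eq_comm]
    _ = trace (S * C * (1 - W)ᵀ * Sᵀ * (1 - J)) := by rw [hSC]
    _ = trace (C * (S * (1 - W))ᵀ * ((1 - J) * S)) := by
        simp only [transpose_mul, Matrix.mul_assoc]
        rw [trace_mul_comm S]
        simp only [Matrix.mul_assoc]
    _ = trace (C * (S * (1 - W))ᵀ * (S - J * S)) := by rw [Matrix.sub_mul, Matrix.one_mul]

theorem optimal_lambda_lt_one_general
    (R M : ℕ) (hR : 2 ≤ R)
    (W0 : Matrix (Fin R ⊕ Fin M) (Fin R ⊕ Fin M) ℝ)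
    (hW0nonneg : ∀ i j, 0 ≤ W0 i j)
    (hW0diag : ∀ i, W0 i i = 0)
    (W : Matrix (Fin R ⊕ Fin M) (Fin R ⊕ Fin M) ℝ)
    (hW : W = Matrix.fromBlocks W0.toBlocks₁₁ W0.toBlocks₁₂ 0 1)
    (L : ℝ → Matrix (Fin R ⊕ Fin M) (Fin R ⊕ Fin M) ℝ)
    (hL : ∀ lam : ℝ, L lam = lam • (1 - (1 - lam) • W)⁻¹)
    (S : Matrix (Fin R) (Fin R ⊕ Fin M) ℝ)
    (hS : S = Matrix.of fun i j => if j = Sum.inl i then 1 else 0)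
    (CR : Matrix (Fin R) (Fin R) ℝ)
    (hCR : CR = Matrix.of fun _ _ => (R : ℝ)⁻¹)
    (V : Matrix (Fin R ⊕ Fin M) (Fin R ⊕ Fin M) ℝ)
    (hV : V = Matrix.fromBlocks 0 0 0 1)
    (E : ℝ → Matrix (Fin R) (Fin R ⊕ Fin M) ℝ)
    (hE : ∀ lam : ℝ, E lam = S * L lam - CR * S)
    (e : ℝ → ℝ → ℝ)
    (he : ∀ (lam d : ℝ), e lam d = ((1 + d • V) * (E lam)ᵀ * E lam).trace)
    (d : ℝ) :
    (∃ ε ∈ Set.Ioo (0 : ℝ) 1,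
        StrictMonoOn (fun lam => e lam d) (Set.Ioc (1 - ε) 1))
    ∧ ∀ lamStar ∈ Set.Ioc (0 : ℝ) 1,
        (∀ lam ∈ Set.Ioc (0 : ℝ) 1, e lamStar d ≤ e lam d) → lamStar < 1 := by
  have hS' : S = fromCols 1 0 := by
    rw [hS]
    ext i (j | j) <;> simp [one_apply, eq_comm]
  have hSC : S * (1 + d • V) = S := by
    rw [hV, Matrix.mul_add, Matrix.mul_one, Matrix.mul_smul, hS', fromCols_mul_fromBlocks]
    simp
  have hC : (1 + d • V).IsSymm := by
    rw [hV]
    exact isSymm_one.add ((isSymm_zero.fromBlocks (by simp) isSymm_one).smul d)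
  have hpos : 0 < trace ((1 + d • V) * (S * (1 - W))ᵀ * (S - CR * S)) :=
    trace_mul_transpose_mul_sub_mul_pos (by simpa using hR)
      (by simpa [hW, toBlocks₁₁] using fun i j => hW0nonneg _ _)
      (by simpa [hW, toBlocks₁₁] using fun i => hW0diag _) hS' hSC
      (by rw [hCR, Fintype.card_fin])
  obtain ⟨δ, hδ, hmono⟩ := exists_strictMonoOn_ball_trace_mul_transpose_mul W hC (E := E)
    (fun t => by rw [hE, hL]) hpos
  simp only [← he] at hmono
  obtain ⟨ε, hε, hmonoε⟩ := exists_mem_Ioo_strictMonoOn_Ioc hδ one_pos hmono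
  exact ⟨⟨ε, hε, hmonoε⟩, fun x hx hmin =>
    lt_of_strictMonoOn_Ioc_of_forall_le hε.1 (by linarith [hε.2]) hmonoε hx hmin⟩

/-- In the malicious-agent setup, for every fixed `d ≥ 0` the map
`λ ↦ e(λ, d)` is strictly increasing on some interval `(1 − ε, 1]` with `ε ∈ (0,1)`;
consequently every minimizer `λ*` of `e(·, d)` over `(0,1]` satisfies `λ* < 1`. -/
theorem optimal_lambda_lt_one
    (R M : ℕ) (hR : 2 ≤ R) (hM : 1 ≤ M)
    (W0 : Matrix (Fin R ⊕ Fin M) (Fin R ⊕ Fin M) ℝ)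
    (hW0symm : W0.IsSymm)
    (hW0nonneg : ∀ i j, 0 ≤ W0 i j)
    (hW0row : ∀ i, ∑ j, W0 i j = 1)
    (hW0diag : ∀ i, W0 i i = 0)
    (hW0irr : ∀ i j, ∃ k : ℕ, 0 < (W0 ^ k) i j)
    (W : Matrix (Fin R ⊕ Fin M) (Fin R ⊕ Fin M) ℝ)
    (hW : W = Matrix.fromBlocks W0.toBlocks₁₁ W0.toBlocks₁₂ 0 1)
    (hW12 : W0.toBlocks₁₂ ≠ 0)
    (L : ℝ → Matrix (Fin R ⊕ Fin M) (Fin R ⊕ Fin M) ℝ)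
    (hL : ∀ lam : ℝ, L lam = lam • (1 - (1 - lam) • W)⁻¹)
    (S : Matrix (Fin R) (Fin R ⊕ Fin M) ℝ)
    (hS : S = Matrix.of fun i j => if j = Sum.inl i then 1 else 0)
    (CR : Matrix (Fin R) (Fin R) ℝ)
    (hCR : CR = Matrix.of fun _ _ => (R : ℝ)⁻¹)
    (V : Matrix (Fin R ⊕ Fin M) (Fin R ⊕ Fin M) ℝ)
    (hV : V = Matrix.fromBlocks 0 0 0 1)
    (E : ℝ → Matrix (Fin R) (Fin R ⊕ Fin M) ℝ)
    (hE : ∀ lam : ℝ, E lam = S * L lam - CR * S)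
    (e : ℝ → ℝ → ℝ)
    (he : ∀ (lam d : ℝ), e lam d = ((1 + d • V) * (E lam)ᵀ * E lam).trace)
    (d : ℝ) (hd : 0 ≤ d) :
    (∃ ε ∈ Set.Ioo (0 : ℝ) 1,
        StrictMonoOn (fun lam => e lam d) (Set.Ioc (1 - ε) 1))
    ∧ ∀ lamStar ∈ Set.Ioc (0 : ℝ) 1,
        (∀ lam ∈ Set.Ioc (0 : ℝ) 1, e lamStar d ≤ e lam d) → lamStar < 1 :=
  optimal_lambda_lt_one_general R M hR W0 hW0nonneg hW0diag W hW L hL S hS CR hCR V hV E hE e he d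
end

section
/- With the malicious-agent setup, for every fixed λ ∈ (0,1) the function d ↦ e(λ, d) is strictly increasing on [0, ∞); equivalently, the slope tr(L₁₂(λ)ᵀ·L₁₂(λ)) of e(λ, ·) (which is affine in d) is strictly positive for all λ ∈ (0,1). That is, larger outlier-noise variance yields strictly larger expected consensus error. -/
/-!
The error `e(λ, ·)` is affine in `d`, with slope `tr(L₁₂ᵀ L₁₂) = ‖L₁₂‖_F²`, so everything reduces
to `L₁₂ ≠ 0`. The matrix `I - (1 - λ) W` is strictly diagonally dominant, hence invertible, and
its `(1,2)` block `-(1 - λ) W₁₂` is nonzero. If `A X = I` and `X₁₂ = 0`, then `A₂₂ X₂₂ = I` and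
`A₁₂ X₂₂ = 0`, forcing `A₁₂ = 0`; applied to `X = A⁻¹` this gives `L₁₂ = λ X₁₂ ≠ 0`.
-/

open Matrix

namespace Matrix

variable {l m n : Type*} [Fintype m] [Fintype n]

theorem toBlocks₁₂_eq_zero_of_mul_eq_one [DecidableEq m] [DecidableEq n] {α : Type*} [CommRing α]
    {A X : Matrix (m ⊕ n) (m ⊕ n) α} (h : A * X = 1) (hX : X.toBlocks₁₂ = 0) :
    A.toBlocks₁₂ = 0 := by
  rw [← fromBlocks_toBlocks A, ← fromBlocks_toBlocks X, fromBlocks_multiply, ← fromBlocks_one,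
    fromBlocks_inj, hX, Matrix.mul_zero, Matrix.mul_zero, zero_add, zero_add] at h
  obtain ⟨-, h₁₂, -, h₂₂⟩ := h
  calc A.toBlocks₁₂ = A.toBlocks₁₂ * (X.toBlocks₂₂ * A.toBlocks₂₂) := by
        rw [mul_eq_one_comm.1 h₂₂, Matrix.mul_one]
    _ = 0 := by rw [← Matrix.mul_assoc, h₁₂, Matrix.zero_mul]

theorem toBlocks₁₂_inv_ne_zero [DecidableEq m] [DecidableEq n] {α : Type*} [CommRing α]
    {A : Matrix (m ⊕ n) (m ⊕ n) α} (hA : IsUnit A.det) (hA₁₂ : A.toBlocks₁₂ ≠ 0) :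
    A⁻¹.toBlocks₁₂ ≠ 0 :=
  fun h => hA₁₂ (toBlocks₁₂_eq_zero_of_mul_eq_one (mul_nonsing_inv A hA) h)

theorem trace_fromBlocks_zero_one_mul_transpose_mul [Fintype l] [DecidableEq n] {α : Type*}
    [CommRing α] (E : Matrix l (m ⊕ n) α) :
    ((fromBlocks 0 0 0 1 : Matrix (m ⊕ n) (m ⊕ n) α) * Eᵀ * E).trace =
      (E.toCols₂ᵀ * E.toCols₂).trace := by
  simp [trace, Matrix.mul_apply, Fintype.sum_sum_type, toCols₂, one_apply]

theorem trace_transpose_mul_self_pos {A : Matrix m n ℝ} (hA : A ≠ 0) : 0 < (Aᵀ * A).trace := by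
  rw [← conjTranspose_eq_transpose_of_trivial]
  exact (posSemidef_conjTranspose_mul_self A).trace_nonneg.lt_of_ne
    (Ne.symm (mt trace_conjTranspose_mul_self_eq_zero_iff.1 hA))

theorem fromBlocks_toBlocks₁₁_toBlocks₁₂_zero_one_mem_rowStochastic [DecidableEq m] [DecidableEq n]
    {W : Matrix (m ⊕ n) (m ⊕ n) ℝ} (hW : W ∈ rowStochastic ℝ (m ⊕ n)) :
    fromBlocks W.toBlocks₁₁ W.toBlocks₁₂ 0 1 ∈ rowStochastic ℝ (m ⊕ n) := by
  rw [mem_rowStochastic_iff_sum]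
  refine ⟨?_, ?_⟩
  · rintro (i | i) (j | j) <;>
      simp [toBlocks₁₁, toBlocks₁₂, nonneg_of_mem_rowStochastic hW, one_apply, apply_ite]
  · rintro (i | i)
    · simpa [toBlocks₁₁, toBlocks₁₂, Fintype.sum_sum_type] using
        sum_row_of_mem_rowStochastic hW (Sum.inl i)
    · simp [Fintype.sum_sum_type, one_apply]

theorem det_one_sub_smul_ne_zero [DecidableEq n] {W : Matrix n n ℝ}
    (hW : W ∈ rowStochastic ℝ n) {c : ℝ} (hc₀ : 0 ≤ c) (hc₁ : c < 1) : (1 - c • W).det ≠ 0 := by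
  refine det_ne_zero_of_sum_row_lt_diag fun k => ?_
  have hoff : ∑ j ∈ Finset.univ.erase k, ‖(1 - c • W) k j‖ = c * (1 - W k k) := by
    rw [← sum_row_of_mem_rowStochastic hW k, ← Finset.sum_erase_eq_sub (Finset.mem_univ k),
      Finset.mul_sum]
    refine Finset.sum_congr rfl fun j hj => ?_
    simp [one_apply_ne (Finset.ne_of_mem_erase hj).symm, abs_of_nonneg hc₀,
      abs_of_nonneg (nonneg_of_mem_rowStochastic hW)]
  have hkk : W k k ≤ 1 := le_one_of_mem_rowStochastic hW
  rw [hoff, sub_apply, one_apply_eq, smul_apply, smul_eq_mul, Real.norm_of_nonneg (by nlinarith)]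
  linarith

end Matrix

theorem error_strictly_increasing_in_d_general
    (R M : ℕ)
    (W0 : Matrix (Fin R ⊕ Fin M) (Fin R ⊕ Fin M) ℝ)
    (hW0nonneg : ∀ i j, 0 ≤ W0 i j)
    (hW0row : ∀ i, ∑ j, W0 i j = 1)
    (W : Matrix (Fin R ⊕ Fin M) (Fin R ⊕ Fin M) ℝ)
    (hW : W = Matrix.fromBlocks W0.toBlocks₁₁ W0.toBlocks₁₂ 0 1)
    (hW12 : W0.toBlocks₁₂ ≠ 0)
    (L : ℝ → Matrix (Fin R ⊕ Fin M) (Fin R ⊕ Fin M) ℝ)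
    (hL : ∀ lam : ℝ, L lam = lam • (1 - (1 - lam) • W)⁻¹)
    (S : Matrix (Fin R) (Fin R ⊕ Fin M) ℝ)
    (hS : S = Matrix.of fun i j => if j = Sum.inl i then 1 else 0)
    (CR : Matrix (Fin R) (Fin R) ℝ)
    (V : Matrix (Fin R ⊕ Fin M) (Fin R ⊕ Fin M) ℝ)
    (hV : V = Matrix.fromBlocks 0 0 0 1)
    (E : ℝ → Matrix (Fin R) (Fin R ⊕ Fin M) ℝ)
    (hE : ∀ lam : ℝ, E lam = S * L lam - CR * S)
    (e : ℝ → ℝ → ℝ)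
    (he : ∀ (lam d : ℝ), e lam d = ((1 + d • V) * (E lam)ᵀ * E lam).trace)
    (lam : ℝ) (hlam : lam ∈ Set.Ioo (0 : ℝ) 1) :
    StrictMonoOn (fun d => e lam d) (Set.Ici 0)
    ∧ 0 < ((L lam).toBlocks₁₂ᵀ * (L lam).toBlocks₁₂).trace := by
  obtain ⟨hlam₀, hlam₁⟩ := hlam
  have hWstoch : W ∈ rowStochastic ℝ _ := hW ▸
    fromBlocks_toBlocks₁₁_toBlocks₁₂_zero_one_mem_rowStochastic
      (mem_rowStochastic_iff_sum.2 ⟨hW0nonneg, hW0row⟩)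
  have hdet := det_one_sub_smul_ne_zero hWstoch (sub_nonneg.2 hlam₁.le) (by linarith)
  have hA₁₂ : (1 - (1 - lam) • W).toBlocks₁₂ ≠ 0 := by
    have : (1 - (1 - lam) • W).toBlocks₁₂ = -(1 - lam) • W0.toBlocks₁₂ := by
      ext i j
      simp [hW, toBlocks₁₂]
      ring
    rw [this]
    exact smul_ne_zero (by linarith) hW12
  have hL₁₂ : (L lam).toBlocks₁₂ ≠ 0 := by
    have : (L lam).toBlocks₁₂ = lam • (1 - (1 - lam) • W)⁻¹.toBlocks₁₂ := by
      ext i j; simp [hL, toBlocks₁₂]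
    rw [this]
    exact smul_ne_zero hlam₀.ne' (toBlocks₁₂_inv_ne_zero (isUnit_iff_ne_zero.2 hdet) hA₁₂)
  have hE₂ : (E lam).toCols₂ = (L lam).toBlocks₁₂ := by
    ext i m; simp [hE, hS, toCols₂, toBlocks₁₂, Matrix.mul_apply]
  have he_affine : ∀ d, e lam d =
      ((E lam)ᵀ * E lam).trace + d * ((L lam).toBlocks₁₂ᵀ * (L lam).toBlocks₁₂).trace := by
    intro d
    rw [he, Matrix.add_mul, Matrix.add_mul, Matrix.one_mul, Matrix.smul_mul, Matrix.smul_mul,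
      trace_add, trace_smul, hV, trace_fromBlocks_zero_one_mul_transpose_mul, hE₂, smul_eq_mul]
  have hslope := trace_transpose_mul_self_pos hL₁₂
  refine ⟨?_, hslope⟩
  rw [show (fun d => e lam d) = _ from funext he_affine]
  exact ((strictMono_mul_right_of_pos hslope).const_add _).strictMonoOn _

/-- In the malicious-agent setup, for every fixed `λ ∈ (0,1)` the
function `d ↦ e(λ, d)` is strictly increasing on `[0, ∞)`; equivalently its slope
`tr(L₁₂(λ)ᵀ·L₁₂(λ))` is strictly positive: larger outlier-noise variance yields
strictly larger expected consensus error. -/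
theorem error_strictly_increasing_in_d
    (R M : ℕ) (hR : 2 ≤ R) (hM : 1 ≤ M)
    (W0 : Matrix (Fin R ⊕ Fin M) (Fin R ⊕ Fin M) ℝ)
    (hW0symm : W0.IsSymm)
    (hW0nonneg : ∀ i j, 0 ≤ W0 i j)
    (hW0row : ∀ i, ∑ j, W0 i j = 1)
    (hW0diag : ∀ i, W0 i i = 0)
    (hW0irr : ∀ i j, ∃ k : ℕ, 0 < (W0 ^ k) i j)
    (W : Matrix (Fin R ⊕ Fin M) (Fin R ⊕ Fin M) ℝ)
    (hW : W = Matrix.fromBlocks W0.toBlocks₁₁ W0.toBlocks₁₂ 0 1)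
    (hW12 : W0.toBlocks₁₂ ≠ 0)
    (L : ℝ → Matrix (Fin R ⊕ Fin M) (Fin R ⊕ Fin M) ℝ)
    (hL : ∀ lam : ℝ, L lam = lam • (1 - (1 - lam) • W)⁻¹)
    (S : Matrix (Fin R) (Fin R ⊕ Fin M) ℝ)
    (hS : S = Matrix.of fun i j => if j = Sum.inl i then 1 else 0)
    (CR : Matrix (Fin R) (Fin R) ℝ)
    (hCR : CR = Matrix.of fun _ _ => (R : ℝ)⁻¹)
    (V : Matrix (Fin R ⊕ Fin M) (Fin R ⊕ Fin M) ℝ)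
    (hV : V = Matrix.fromBlocks 0 0 0 1)
    (E : ℝ → Matrix (Fin R) (Fin R ⊕ Fin M) ℝ)
    (hE : ∀ lam : ℝ, E lam = S * L lam - CR * S)
    (e : ℝ → ℝ → ℝ)
    (he : ∀ (lam d : ℝ), e lam d = ((1 + d • V) * (E lam)ᵀ * E lam).trace)
    (lam : ℝ) (hlam : lam ∈ Set.Ioo (0 : ℝ) 1) :
    StrictMonoOn (fun d => e lam d) (Set.Ici 0)
    ∧ 0 < ((L lam).toBlocks₁₂ᵀ * (L lam).toBlocks₁₂).trace :=
  error_strictly_increasing_in_d_general R M W0 hW0nonneg hW0row W hW hW12 L hL S hS CR V hV E hE e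
    he lam hlam
end

section
/- With the malicious-agent setup, for every fixed λ ∈ (0,1) the function d ↦ (∂e/∂λ)(λ, d) is strictly decreasing on [0, ∞). Consequently, if λ₀ ∈ (0,1) is a critical point of e(·, d₁) (i.e., (∂e/∂λ)(λ₀, d₁) = 0) and d₂ > d₁ ≥ 0, then (∂e/∂λ)(λ₀, d₂) < 0; hence the critical points of e(·, d) are strictly increasing with the noise intensity d. -/
/-!
Expanding the trace, `e(λ, d) = ‖E(λ)‖² + d · ∑_{i ∈ ℛ, m ∈ ℳ} L(λ)ᵢₘ²`, so `∂e/∂λ` is affine in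
`d` with slope the derivative of `∑ L(λ)ᵢₘ²`, and it suffices to show that this slope is negative.

Write `L(λ) = λ Q` with `Q = (1 - (1 - λ) W)⁻¹`. Since `W` is nonnegative and substochastic, a
discrete minimum principle shows that `1 - μ W` is invertible for `0 ≤ μ < 1` with an entrywise
nonnegative inverse; moreover `Q = 1 + (1 - λ) W Q` gives `Qᵢᵢ ≥ 1`, and `Qₘₘ = 1/λ` on the
absorbing rows `m ∈ ℳ`. Differentiating, `(1 - λ) L' = Q - λ Q²`, and
`(Q²)ᵢₘ ≥ Qᵢᵢ Qᵢₘ + Qᵢₘ Qₘₘ` bounds its `(i, m)` entry by `-λ Qᵢₘ ≤ 0`. Hence every `Lᵢₘ` is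
nonnegative and nonincreasing, and strictly decreasing where `Wᵢₘ > 0`; such an entry exists
because `W₁₂ ≠ 0`.
-/

open Matrix

section Algebra

variable {α n : Type*} [CommRing α] [Fintype n] [DecidableEq n] {W : Matrix n n α} {μ : α}

theorem inv_one_sub_smul_eq_one_add (h : IsUnit (1 - μ • W)) :
    (1 - μ • W)⁻¹ = 1 + μ • (W * (1 - μ • W)⁻¹) := by
  have := mul_nonsing_inv _ ((isUnit_iff_isUnit_det _).mp h)
  rwa [sub_mul, one_mul, smul_mul_assoc, sub_eq_iff_eq_add] at this

theorem one_sub_mul_inv_one_sub_smul_apply_self (h : IsUnit (1 - μ • W)) {m : n}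
    (hm : W m = Pi.single m 1) : (1 - μ) * (1 - μ • W)⁻¹ m m = 1 := by
  have := congrFun (congrFun (inv_one_sub_smul_eq_one_add h) m) m
  simp only [Matrix.add_apply, one_apply_eq, Matrix.smul_apply, smul_eq_mul, mul_apply, hm,
    Pi.single_apply, ite_mul, one_mul, zero_mul, Finset.sum_ite_eq', Finset.mem_univ,
    if_true] at this
  linear_combination this

end Algebra

section Derivative

attribute [local instance] Matrix.linftyOpNormedRing Matrix.linftyOpNormedAlgebra

theorem hasDerivAt_smul_inv_one_sub_smul_apply {n : Type*} [Fintype n] [DecidableEq n]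
    (W : Matrix n n ℝ) {x : ℝ} (hx : IsUnit (1 - (1 - x) • W)) (a b : n) :
    HasDerivAt (fun t => (t • (1 - (1 - t) • W)⁻¹) a b)
      (((1 - (1 - x) • W)⁻¹ - x • ((1 - (1 - x) • W)⁻¹ * W * (1 - (1 - x) • W)⁻¹)) a b) x := by
  have : CompleteSpace (Matrix n n ℝ) := FiniteDimensional.complete ℝ _
  obtain ⟨u, hu⟩ := hx
  have hK := (((hasDerivAt_id' x).const_sub 1).smul_const W).const_sub (1 : Matrix n n ℝ)
  simp only [neg_smul, one_smul, neg_neg] at hK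
  have hL := (hasDerivAt_id' x).smul
    ((hasFDerivAt_ringInverse (𝕜 := ℝ) u).comp_hasDerivAt_of_eq x hK hu)
  simp only [_root_.neg_apply, ContinuousLinearMap.mulLeftRight_apply, one_smul,
    Function.comp_apply, ← hu, Ring.inverse_unit] at hL
  simp only [← hu, nonsing_inv_eq_ringInverse, Ring.inverse_unit]
  refine ((entryLinearMap ℝ ℝ a b).toContinuousLinearMap.hasFDerivAt.comp_hasDerivAt x
    hL).congr_deriv ?_
  simp only [smul_neg, sub_eq_add_neg, add_comm]
  rfl

end Derivative

section Substochastic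

variable {n : Type*} [Fintype n] [DecidableEq n] {W : Matrix n n ℝ} {μ : ℝ}

theorem nonneg_of_nonneg_one_sub_smul_mulVec (hW : ∀ i j, 0 ≤ W i j)
    (hW1 : ∀ i, ∑ j, W i j ≤ 1) (hμ0 : 0 ≤ μ) (hμ1 : μ < 1) {v : n → ℝ}
    (hv : 0 ≤ (1 - μ • W) *ᵥ v) : 0 ≤ v := by
  intro a
  obtain ⟨b, -, hb⟩ := Finset.exists_min_image Finset.univ v ⟨a, Finset.mem_univ a⟩
  suffices (0 : ℝ) ≤ v b from this.trans (hb a (Finset.mem_univ a))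
  by_contra! hneg
  have hmean : v b ≤ ∑ c, W b c * v c :=
    calc v b ≤ (∑ c, W b c) * v b := by nlinarith [hW1 b]
      _ ≤ ∑ c, W b c * v c := by
        rw [Finset.sum_mul]
        exact Finset.sum_le_sum fun c _ =>
          mul_le_mul_of_nonneg_left (hb c (Finset.mem_univ c)) (hW b c)
  have hvb : μ * ∑ c, W b c * v c ≤ v b := by
    have := hv b
    rw [sub_mulVec, one_mulVec, smul_mulVec] at this
    simpa [mulVec, dotProduct] using this
  nlinarith [mul_le_mul_of_nonneg_left hmean hμ0]

theorem isUnit_one_sub_smul (hW : ∀ i j, 0 ≤ W i j) (hW1 : ∀ i, ∑ j, W i j ≤ 1)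
    (hμ0 : 0 ≤ μ) (hμ1 : μ < 1) : IsUnit (1 - μ • W) := by
  refine mulVec_injective_iff_isUnit.mp fun u v huv => ?_
  have hpos := nonneg_of_nonneg_one_sub_smul_mulVec hW hW1 hμ0 hμ1 (v := u - v)
  have hneg := nonneg_of_nonneg_one_sub_smul_mulVec hW hW1 hμ0 hμ1 (v := v - u)
  simp only [mulVec_sub, huv, sub_self, le_refl, sub_nonneg, forall_const] at hpos hneg
  exact le_antisymm hneg hpos

theorem inv_one_sub_smul_nonneg (hW : ∀ i j, 0 ≤ W i j) (hW1 : ∀ i, ∑ j, W i j ≤ 1)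
    (hμ0 : 0 ≤ μ) (hμ1 : μ < 1) (i j : n) : 0 ≤ (1 - μ • W)⁻¹ i j := by
  have hcol : 0 ≤ (1 - μ • W) *ᵥ ((1 - μ • W)⁻¹ *ᵥ Pi.single j 1) := by
    rw [mulVec_mulVec, mul_nonsing_inv _
      ((isUnit_iff_isUnit_det _).mp (isUnit_one_sub_smul hW hW1 hμ0 hμ1)), one_mulVec]
    exact Pi.single_nonneg.mpr zero_le_one
  simpa using nonneg_of_nonneg_one_sub_smul_mulVec hW hW1 hμ0 hμ1 hcol i

theorem one_le_inv_one_sub_smul_apply_self (hW : ∀ i j, 0 ≤ W i j)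
    (hW1 : ∀ i, ∑ j, W i j ≤ 1) (hμ0 : 0 ≤ μ) (hμ1 : μ < 1) (i : n) :
    1 ≤ (1 - μ • W)⁻¹ i i := by
  rw [inv_one_sub_smul_eq_one_add (isUnit_one_sub_smul hW hW1 hμ0 hμ1), Matrix.add_apply,
    one_apply_eq, Matrix.smul_apply, smul_eq_mul, le_add_iff_nonneg_right]
  exact mul_nonneg hμ0 (Finset.sum_nonneg fun k _ =>
    mul_nonneg (hW i k) (inv_one_sub_smul_nonneg hW hW1 hμ0 hμ1 k i))

theorem inv_one_sub_smul_apply_pos (hW : ∀ i j, 0 ≤ W i j) (hW1 : ∀ i, ∑ j, W i j ≤ 1)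
    (hμ0 : 0 < μ) (hμ1 : μ < 1) {i m : n} (hm : W m = Pi.single m 1) (him : i ≠ m)
    (hWim : 0 < W i m) : 0 < (1 - μ • W)⁻¹ i m := by
  have hunit := isUnit_one_sub_smul hW hW1 hμ0.le hμ1
  set Q := (1 - μ • W)⁻¹
  have hQim : Q i m = μ * ∑ k, W i k * Q k m := by
    simpa [one_apply_ne him, mul_apply] using
      congrFun (congrFun (inv_one_sub_smul_eq_one_add hunit) i) m
  have hQmm : 0 < Q m m := by
    have h := one_sub_mul_inv_one_sub_smul_apply_self hunit hm
    exact pos_of_mul_pos_right (by rw [h]; exact one_pos) (sub_nonneg.mpr hμ1.le)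
  have hsum : W i m * Q m m ≤ ∑ k, W i k * Q k m :=
    Finset.single_le_sum (f := fun k => W i k * Q k m)
      (fun k _ => mul_nonneg (hW i k) (inv_one_sub_smul_nonneg hW hW1 hμ0.le hμ1 k m))
      (Finset.mem_univ m)
  rw [hQim]
  exact mul_pos hμ0 ((mul_pos hWim hQmm).trans_le hsum)

theorem exists_hasDerivAt_smul_inv_one_sub_smul_apply_le (hW : ∀ i j, 0 ≤ W i j)
    (hW1 : ∀ i, ∑ j, W i j ≤ 1) {x : ℝ} (hx : x ∈ Set.Ioo 0 1) {i m : n}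
    (hm : W m = Pi.single m 1) (him : i ≠ m) :
    ∃ D, HasDerivAt (fun t => (t • (1 - (1 - t) • W)⁻¹) i m) D x ∧
      (1 - x) * D ≤ -x * (1 - (1 - x) • W)⁻¹ i m := by
  obtain ⟨hx0, hx1⟩ := hx
  have hμ0 : 0 ≤ 1 - x := by linarith
  have hμ1 : 1 - x < 1 := by linarith
  have hunit := isUnit_one_sub_smul hW hW1 hμ0 hμ1
  refine ⟨_, hasDerivAt_smul_inv_one_sub_smul_apply W hunit i m, ?_⟩
  set Q := (1 - (1 - x) • W)⁻¹
  have hQWQ : (1 - x) * (Q * W * Q) i m = (Q * Q) i m - Q i m := by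
    have : (1 - x) • (Q * W * Q) = Q * Q - Q := by
      rw [mul_assoc, ← mul_smul_comm,
        ← sub_eq_iff_eq_add'.mpr (inv_one_sub_smul_eq_one_add hunit), mul_sub, mul_one]
    simpa using congrFun (congrFun this i) m
  have hQmm : x * Q m m = 1 := by
    simpa using one_sub_mul_inv_one_sub_smul_apply_self hunit hm
  have hQQ : Q i i * Q i m + Q i m * Q m m ≤ (Q * Q) i m := by
    rw [mul_apply, ← Finset.sum_pair (f := fun k => Q i k * Q k m) him]
    exact Finset.sum_le_sum_of_subset_of_nonneg (Finset.subset_univ _) fun k _ _ =>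
      mul_nonneg (inv_one_sub_smul_nonneg hW hW1 hμ0 hμ1 i k)
        (inv_one_sub_smul_nonneg hW hW1 hμ0 hμ1 k m)
  have hQii := one_le_inv_one_sub_smul_apply_self hW hW1 hμ0 hμ1 i
  have hQim := inv_one_sub_smul_nonneg hW hW1 hμ0 hμ1 i m
  simp only [Matrix.sub_apply, Matrix.smul_apply, smul_eq_mul]
  nlinarith [mul_le_mul_of_nonneg_left hQQ hx0.le, mul_le_mul_of_nonneg_right hQii hQim]

end Substochastic

theorem exists_hasDerivAt_sum_sq_neg {ι κ : Type*} [Fintype ι] [Fintype κ] [DecidableEq ι]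
    [DecidableEq κ] {W : Matrix (ι ⊕ κ) (ι ⊕ κ) ℝ} (hW : ∀ i j, 0 ≤ W i j)
    (hW1 : ∀ i, ∑ j, W i j ≤ 1) (habs : ∀ k, W (Sum.inr k) = Pi.single (Sum.inr k) 1)
    {i₀ : ι} {k₀ : κ} (hpos : 0 < W (Sum.inl i₀) (Sum.inr k₀)) {x : ℝ} (hx : x ∈ Set.Ioo 0 1) :
    ∃ g < 0, HasDerivAt
      (fun t => ∑ k, ∑ i, (t • (1 - (1 - t) • W)⁻¹) (Sum.inl i) (Sum.inr k) ^ 2) g x := by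
  obtain ⟨hx0, hx1⟩ := hx
  have hμ0 : 0 ≤ 1 - x := by linarith
  have hμ1 : 1 - x < 1 := by linarith
  set Q := (1 - (1 - x) • W)⁻¹
  choose D hD hDle using fun (i : ι) (k : κ) =>
    exists_hasDerivAt_smul_inv_one_sub_smul_apply_le hW hW1 ⟨hx0, hx1⟩ (habs k)
      (Sum.inl_ne_inr (a := i))
  have hterm : ∀ i k, 2 * (x * Q (Sum.inl i) (Sum.inr k)) * D i k ≤ 0 := fun i k => by
    have := inv_one_sub_smul_nonneg hW hW1 hμ0 hμ1 (Sum.inl i) (Sum.inr k)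
    have hD : D i k ≤ 0 := by nlinarith [hDle i k]
    exact mul_nonpos_of_nonneg_of_nonpos (by positivity) hD
  have hterm₀ : 2 * (x * Q (Sum.inl i₀) (Sum.inr k₀)) * D i₀ k₀ < 0 := by
    have := inv_one_sub_smul_apply_pos hW hW1 (by linarith) hμ1 (habs k₀) Sum.inl_ne_inr hpos
    have hD : D i₀ k₀ < 0 := by nlinarith [hDle i₀ k₀]
    exact mul_neg_of_pos_of_neg (by positivity) hD
  refine ⟨∑ k, ∑ i, 2 * (x * Q (Sum.inl i) (Sum.inr k)) * D i k, ?_, ?_⟩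
  · exact Finset.sum_neg' (fun k _ => Finset.sum_nonpos fun i _ => hterm i k)
      ⟨k₀, Finset.mem_univ _, Finset.sum_neg' (fun i _ => hterm i k₀)
        ⟨i₀, Finset.mem_univ _, hterm₀⟩⟩
  · refine HasDerivAt.fun_sum fun k _ => HasDerivAt.fun_sum fun i _ => ?_
    exact ((hD i k).fun_pow 2).congr_deriv (by simp [Q])

theorem fromBlocks_zero_one_apply_inr {α ι κ : Type*} [Zero α] [One α] [DecidableEq ι]
    [DecidableEq κ] (A : Matrix ι ι α) (B : Matrix ι κ α) (k : κ) :
    fromBlocks A B 0 1 (Sum.inr k) = Pi.single (Sum.inr k) 1 := by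
  ext (j | k') <;> simp [one_apply, Pi.single_apply, eq_comm]

theorem fromBlocks_toBlocks_zero_one_apply_nonneg {ι κ : Type*} [DecidableEq ι] [DecidableEq κ]
    {W0 : Matrix (ι ⊕ κ) (ι ⊕ κ) ℝ}
    (hW0 : ∀ i j, 0 ≤ W0 i j) (a b : ι ⊕ κ) :
    0 ≤ fromBlocks W0.toBlocks₁₁ W0.toBlocks₁₂ 0 1 a b := by
  rcases a with i | k
  · rcases b with j | k' <;> simp [toBlocks₁₁, toBlocks₁₂, hW0]
  · simp [fromBlocks_zero_one_apply_inr, Pi.single_apply, apply_ite]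

theorem sum_fromBlocks_toBlocks_zero_one_apply {ι κ : Type*} [Fintype ι] [Fintype κ]
    [DecidableEq ι] [DecidableEq κ] {W0 : Matrix (ι ⊕ κ) (ι ⊕ κ) ℝ}
    (hW0 : ∀ i, ∑ j, W0 i j = 1) (a : ι ⊕ κ) :
    ∑ b, fromBlocks W0.toBlocks₁₁ W0.toBlocks₁₂ 0 1 a b = 1 := by
  rcases a with i | k
  · simp [Fintype.sum_sum_type, toBlocks₁₁, toBlocks₁₂, ← hW0 (Sum.inl i)]
  · simp [fromBlocks_zero_one_apply_inr]

theorem trace_one_add_smul_fromBlocks_mul_transpose_mul {α m ι κ : Type*} [CommRing α]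
    [Fintype m] [Fintype ι] [Fintype κ] [DecidableEq ι] [DecidableEq κ]
    (E : Matrix m (ι ⊕ κ) α) (d : α) :
    ((1 + d • fromBlocks 0 0 0 1 : Matrix (ι ⊕ κ) (ι ⊕ κ) α) * Eᵀ * E).trace
      = ∑ j, ∑ a, E a j ^ 2 + d * ∑ k, ∑ a, E a (Sum.inr k) ^ 2 := by
  rw [Matrix.add_mul, Matrix.add_mul, Matrix.one_mul, trace_add, Matrix.smul_mul,
    Matrix.smul_mul, trace_smul, smul_eq_mul]
  simp [trace, mul_apply, Fintype.sum_sum_type, one_apply, sq]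

theorem strictAnti_deriv_add_mul {F G : ℝ → ℝ} {x g : ℝ} (hF : DifferentiableAt ℝ F x)
    (hG : HasDerivAt G g x) (hg : g < 0) :
    StrictAnti fun d : ℝ => deriv (fun t => F t + d * G t) x := by
  have hderiv (d : ℝ) : deriv (fun t => F t + d * G t) x = deriv F x + d * g :=
    (hF.hasDerivAt.add (hG.const_mul d)).deriv
  intro d₁ d₂ hd
  simp only [hderiv]
  nlinarith

theorem critical_points_increase_with_d_general
    (R M : ℕ)
    (W0 : Matrix (Fin R ⊕ Fin M) (Fin R ⊕ Fin M) ℝ)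
    (hW0nonneg : ∀ i j, 0 ≤ W0 i j)
    (hW0row : ∀ i, ∑ j, W0 i j = 1)
    (W : Matrix (Fin R ⊕ Fin M) (Fin R ⊕ Fin M) ℝ)
    (hW : W = Matrix.fromBlocks W0.toBlocks₁₁ W0.toBlocks₁₂ 0 1)
    (hW12 : W0.toBlocks₁₂ ≠ 0)
    (L : ℝ → Matrix (Fin R ⊕ Fin M) (Fin R ⊕ Fin M) ℝ)
    (hL : ∀ lam : ℝ, L lam = lam • (1 - (1 - lam) • W)⁻¹)
    (S : Matrix (Fin R) (Fin R ⊕ Fin M) ℝ)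
    (hS : S = Matrix.of fun i j => if j = Sum.inl i then 1 else 0)
    (CR : Matrix (Fin R) (Fin R) ℝ)
    (V : Matrix (Fin R ⊕ Fin M) (Fin R ⊕ Fin M) ℝ)
    (hV : V = Matrix.fromBlocks 0 0 0 1)
    (E : ℝ → Matrix (Fin R) (Fin R ⊕ Fin M) ℝ)
    (hE : ∀ lam : ℝ, E lam = S * L lam - CR * S)
    (e : ℝ → ℝ → ℝ)
    (he : ∀ (lam d : ℝ), e lam d = ((1 + d • V) * (E lam)ᵀ * E lam).trace) :
    (∀ lam ∈ Set.Ioo (0 : ℝ) 1,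
        StrictAntiOn (fun d => deriv (fun t => e t d) lam) (Set.Ici 0))
    ∧ ∀ lam0 ∈ Set.Ioo (0 : ℝ) 1, ∀ d1 d2 : ℝ, 0 ≤ d1 → d1 < d2 →
        deriv (fun t => e t d1) lam0 = 0 → deriv (fun t => e t d2) lam0 < 0 := by
  have hWnn : ∀ a b, 0 ≤ W a b := hW ▸ fromBlocks_toBlocks_zero_one_apply_nonneg hW0nonneg
  have hWrow : ∀ a, ∑ b, W a b ≤ 1 := fun a =>
    (hW ▸ sum_fromBlocks_toBlocks_zero_one_apply hW0row a).le
  have habs : ∀ k, W (Sum.inr k) = Pi.single (Sum.inr k) 1 :=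
    hW ▸ fromBlocks_zero_one_apply_inr _ _
  obtain ⟨i₀, k₀, hpos⟩ : ∃ i k, 0 < W (Sum.inl i) (Sum.inr k) := by
    by_contra! h
    exact hW12 (ext fun i k => le_antisymm (by simpa [hW] using h i k) (hW0nonneg _ _))
  have hE' : ∀ t i j, E t i j = (t • (1 - (1 - t) • W)⁻¹) (Sum.inl i) j - (CR * S) i j := by
    simp [hE, hL, hS, mul_apply]
  have he' : ∀ t d, e t d = ∑ j, ∑ i, E t i j ^ 2
      + d * ∑ k, ∑ i, (t • (1 - (1 - t) • W)⁻¹) (Sum.inl i) (Sum.inr k) ^ 2 := by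
    intro t d
    rw [he, hV, trace_one_add_smul_fromBlocks_mul_transpose_mul]
    simp [hE', hS, mul_apply]
  have key : ∀ x ∈ Set.Ioo (0 : ℝ) 1, StrictAnti fun d => deriv (fun t => e t d) x := by
    intro x hx
    obtain ⟨g, hg, hG⟩ := exists_hasDerivAt_sum_sq_neg hWnn hWrow habs hpos hx
    have hunit := isUnit_one_sub_smul hWnn hWrow (μ := 1 - x) (by linarith [hx.2])
      (by linarith [hx.1])
    have hL' a b := (hasDerivAt_smul_inv_one_sub_smul_apply W hunit a b).differentiableAt
    have hF : DifferentiableAt ℝ (fun t => ∑ j, ∑ i, E t i j ^ 2) x := by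
      simp only [hE']
      exact DifferentiableAt.fun_sum fun j _ => DifferentiableAt.fun_sum fun i _ =>
        ((hL' _ _).sub_const _).fun_pow 2
    simp_rw [he']
    exact strictAnti_deriv_add_mul hF hG hg
  exact ⟨fun x hx => (key x hx).strictAntiOn _,
    fun x hx d₁ d₂ _ hd hcrit => hcrit ▸ key x hx hd⟩

/-- In the malicious-agent setup, for every fixed `λ ∈ (0,1)` the map
`d ↦ (∂e/∂λ)(λ, d)` is strictly decreasing on `[0, ∞)`; consequently, if
`λ₀ ∈ (0,1)` is a critical point of `e(·, d₁)` and `d₂ > d₁ ≥ 0`, then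
`(∂e/∂λ)(λ₀, d₂) < 0` — the critical points of `e(·, d)` strictly increase with `d`. -/
theorem critical_points_increase_with_d
    (R M : ℕ) (hR : 2 ≤ R) (hM : 1 ≤ M)
    (W0 : Matrix (Fin R ⊕ Fin M) (Fin R ⊕ Fin M) ℝ)
    (hW0symm : W0.IsSymm)
    (hW0nonneg : ∀ i j, 0 ≤ W0 i j)
    (hW0row : ∀ i, ∑ j, W0 i j = 1)
    (hW0diag : ∀ i, W0 i i = 0)
    (hW0irr : ∀ i j, ∃ k : ℕ, 0 < (W0 ^ k) i j)
    (W : Matrix (Fin R ⊕ Fin M) (Fin R ⊕ Fin M) ℝ)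
    (hW : W = Matrix.fromBlocks W0.toBlocks₁₁ W0.toBlocks₁₂ 0 1)
    (hW12 : W0.toBlocks₁₂ ≠ 0)
    (L : ℝ → Matrix (Fin R ⊕ Fin M) (Fin R ⊕ Fin M) ℝ)
    (hL : ∀ lam : ℝ, L lam = lam • (1 - (1 - lam) • W)⁻¹)
    (S : Matrix (Fin R) (Fin R ⊕ Fin M) ℝ)
    (hS : S = Matrix.of fun i j => if j = Sum.inl i then 1 else 0)
    (CR : Matrix (Fin R) (Fin R) ℝ)
    (hCR : CR = Matrix.of fun _ _ => (R : ℝ)⁻¹)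
    (V : Matrix (Fin R ⊕ Fin M) (Fin R ⊕ Fin M) ℝ)
    (hV : V = Matrix.fromBlocks 0 0 0 1)
    (E : ℝ → Matrix (Fin R) (Fin R ⊕ Fin M) ℝ)
    (hE : ∀ lam : ℝ, E lam = S * L lam - CR * S)
    (e : ℝ → ℝ → ℝ)
    (he : ∀ (lam d : ℝ), e lam d = ((1 + d • V) * (E lam)ᵀ * E lam).trace) :
    (∀ lam ∈ Set.Ioo (0 : ℝ) 1,
        StrictAntiOn (fun d => deriv (fun t => e t d) lam) (Set.Ici 0))
    ∧ ∀ lam0 ∈ Set.Ioo (0 : ℝ) 1, ∀ d1 d2 : ℝ, 0 ≤ d1 → d1 < d2 →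
        deriv (fun t => e t d1) lam0 = 0 → deriv (fun t => e t d2) lam0 < 0 :=
  critical_points_increase_with_d_general R M W0 hW0nonneg hW0row W hW hW12 L hL S hS CR V hV E hE e
    he
end

section
/- With the malicious-agent setup, for every λ₀ ∈ (0,1) there exists D ≥ 0 such that for all d > D, the derivative (∂e/∂λ)(λ₀, d) is strictly negative; in particular λ₀ is not a critical point of e(·, d) for any d > D. Consequently, as the noise intensity d → +∞, every critical point λ_CR(d) of e(·, d) in (0,1) tends to 1. -/
open Matrix

/-!
Write `W = [[B, C], [0, 1]]` and `N(λ) = (1 - (1 - λ) B)⁻¹` (`dampedInv`). Then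
`L(λ) = [[λ N, (1 - λ) N C], [0, 1]]`, so `e(λ, d) = p(λ) + (1 + d) q(λ)` with
`p(λ) = ‖λ N - C_R‖²` (`regularError`) and `q(λ) = ‖(1 - λ) N C‖²` (`maliciousError`),
in Frobenius norm. Since
`d/dλ ((1 - λ) N) = -N²` and `N = 1 + (1 - λ) B N` dominates the identity entrywise,
`q'(λ) ≤ -2 (1 - λ) c²` for any entry `c > 0` of `C`. By the maximum principle and
irreducibility, `1 - B` is invertible, so `p` is `C¹` near `[0, 1]` and `p'` is bounded there.
Hence `∂e/∂λ ≤ sup p' - 2 d (1 - λ) c² < 0` on `(0, 1 - ε]` once `d` is large.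
-/

open Set Filter Topology

namespace Matrix

section Nonneg

theorem mul_apply_nonneg {n m p : Type*} [Fintype m] {X : Matrix n m ℝ} {Y : Matrix m p ℝ}
    (hX : ∀ i j, 0 ≤ X i j) (hY : ∀ i j, 0 ≤ Y i j) (i : n) (k : p) : 0 ≤ (X * Y) i k :=
  Finset.sum_nonneg fun j _ => mul_nonneg (hX i j) (hY j k)

variable {n : Type*} [Fintype n] {T : Matrix n n ℝ}

theorem sum_smul_apply_lt_one {l : ℝ} (hrow : ∀ i, ∑ j, T i j ≤ 1) (hl : l ∈ Ioc (0 : ℝ) 1)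
    (i : n) : ∑ j, ((1 - l) • T) i j < 1 := by
  simp only [smul_apply, smul_eq_mul, ← Finset.mul_sum]
  nlinarith [hrow i, hl.1, hl.2]

theorem maximum_principle (hT : ∀ i j, 0 ≤ T i j) (hrow : ∀ i, ∑ j, T i j ≤ 1) {y : n → ℝ}
    (hy : y ≤ T *ᵥ y) {i : n} (hmax : ∀ j, y j ≤ y i) (hpos : 0 < y i) :
    ∑ j, T i j = 1 ∧ ∀ j, 0 < T i j → y j = y i := by
  have hgap : ∀ j, 0 ≤ T i j * (y i - y j) := fun j =>
    mul_nonneg (hT i j) (sub_nonneg.mpr (hmax j))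
  have hsplit : ∑ j, T i j * (y i - y j) = (∑ j, T i j) * y i - (T *ᵥ y) i := by
    simp only [mul_sub, Finset.sum_sub_distrib, Finset.sum_mul, mulVec, dotProduct]
  have hle : (∑ j, T i j) * y i ≤ y i := mul_le_of_le_one_left hpos.le (hrow i)
  have hzero : ∑ j, T i j * (y i - y j) = 0 :=
    le_antisymm (by linarith [hy i]) (Finset.sum_nonneg fun j _ => hgap j)
  refine ⟨by nlinarith [hy i, hrow i], fun j hj => ?_⟩
  have := (Finset.sum_eq_zero_iff_of_nonneg fun j _ => hgap j).mp hzero j (Finset.mem_univ j)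
  rcases mul_eq_zero.mp this with h | h
  · exact absurd h hj.ne'
  · linarith

variable [DecidableEq n]

theorem nonneg_of_nonneg_one_sub_mulVec (hT : ∀ i j, 0 ≤ T i j) (hrow : ∀ i, ∑ j, T i j < 1)
    {x : n → ℝ} (hx : 0 ≤ (1 - T) *ᵥ x) : 0 ≤ x := by
  by_contra hneg
  obtain ⟨j, hj⟩ : ∃ j, x j < 0 := by simpa [Pi.le_def] using hneg
  obtain ⟨i, -, hi⟩ := Finset.univ.exists_min_image x ⟨j, Finset.mem_univ j⟩
  have hxi : x i < 0 := (hi j (Finset.mem_univ j)).trans_lt hj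
  have hsum : (∑ j, T i j) * x i ≤ ∑ j, T i j * x j := by
    rw [Finset.sum_mul]
    exact Finset.sum_le_sum fun j _ =>
      mul_le_mul_of_nonneg_left (hi j (Finset.mem_univ j)) (hT i j)
  have hxTx : ∑ j, T i j * x j ≤ x i := by
    have := hx i
    rwa [sub_mulVec, one_mulVec, Pi.zero_apply, Pi.sub_apply, sub_nonneg] at this
  nlinarith [hrow i]

theorem isUnit_one_sub_of_sum_lt_one (hT : ∀ i j, 0 ≤ T i j) (hrow : ∀ i, ∑ j, T i j < 1) :
    IsUnit (1 - T) := by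
  refine mulVec_injective_iff_isUnit.mp fun x y hxy => ?_
  have hmono : ∀ v, (1 - T) *ᵥ v = 0 → 0 ≤ v := fun v hv =>
    nonneg_of_nonneg_one_sub_mulVec hT hrow hv.ge
  have h : (1 - T) *ᵥ (x - y) = 0 := by rw [mulVec_sub, hxy, sub_self]
  have h' : (1 - T) *ᵥ -(x - y) = 0 := by rw [mulVec_neg, h, neg_zero]
  exact sub_eq_zero.mp (le_antisymm (neg_nonneg.mp (hmono _ h')) (hmono _ h))

theorem inv_one_sub_nonneg (hT : ∀ i j, 0 ≤ T i j) (hrow : ∀ i, ∑ j, T i j < 1) (i j : n) :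
    0 ≤ (1 - T)⁻¹ i j := by
  have hU := isUnit_one_sub_of_sum_lt_one hT hrow
  have hcol : 0 ≤ (1 - T)⁻¹ *ᵥ Pi.single j 1 := by
    refine nonneg_of_nonneg_one_sub_mulVec hT hrow ?_
    rw [mulVec_mulVec, mul_nonsing_inv _ ((isUnit_iff_isUnit_det _).mp hU), one_mulVec]
    exact Pi.single_nonneg.mpr zero_le_one
  simpa [mulVec_single] using hcol i

theorem isUnit_one_sub_smul {l : ℝ} (hT : ∀ i j, 0 ≤ T i j) (hrow : ∀ i, ∑ j, T i j ≤ 1)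
    (hl : l ∈ Ioc (0 : ℝ) 1) : IsUnit (1 - (1 - l) • T) :=
  isUnit_one_sub_of_sum_lt_one (fun i j => mul_nonneg (sub_nonneg.mpr hl.2) (hT i j))
    (sum_smul_apply_lt_one hrow hl)

theorem mem_of_pow_apply_pos (hT : ∀ i j, 0 ≤ T i j) {P : Set n}
    (hP : ∀ a ∈ P, ∀ b, 0 < T a b → b ∈ P) {a : n} (ha : a ∈ P) :
    ∀ (k : ℕ) (b : n), 0 < (T ^ k) a b → b ∈ P := by
  intro k
  induction k with
  | zero =>
    intro b hab
    by_cases h : a = b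
    · exact h ▸ ha
    · simp [one_apply_ne h] at hab
  | succ k ih =>
    intro b hab
    rw [pow_succ, mul_apply] at hab
    obtain ⟨c, -, hc⟩ := Finset.exists_lt_of_sum_lt (f := fun _ => (0 : ℝ)) (by simpa using hab)
    rcases pos_and_pos_or_neg_and_neg_of_mul_pos hc with ⟨hac, hcb⟩ | ⟨-, hcb⟩
    · exact hP c (ih c hac) b hcb
    · exact absurd (hT c b) hcb.not_ge

end Nonneg

section ToBlocks

variable {α β : Type*} [Fintype α] [Fintype β] {W : Matrix (α ⊕ β) (α ⊕ β) ℝ}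

theorem sum_toBlocks₁₁_add_sum_toBlocks₁₂ (hrow : ∀ i, ∑ j, W i j = 1) (i : α) :
    ∑ j, W.toBlocks₁₁ i j + ∑ k, W.toBlocks₁₂ i k = 1 := by
  rw [← hrow (.inl i), Fintype.sum_sum_type]
  rfl

theorem sum_toBlocks₁₁_le_one (hW : ∀ i j, 0 ≤ W i j) (hrow : ∀ i, ∑ j, W i j = 1) (i : α) :
    ∑ j, W.toBlocks₁₁ i j ≤ 1 := by
  linarith [sum_toBlocks₁₁_add_sum_toBlocks₁₂ hrow i,
    Finset.sum_nonneg (s := Finset.univ) (f := W.toBlocks₁₂ i) fun k _ => hW (.inl i) (.inr k)]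

theorem isUnit_one_sub_toBlocks₁₁ [DecidableEq α] [DecidableEq β] [Nonempty β]
    (hW : ∀ i j, 0 ≤ W i j) (hrow : ∀ i, ∑ j, W i j = 1) (hirr : ∀ i j, ∃ k : ℕ, 0 < (W ^ k) i j) :
    IsUnit (1 - W.toBlocks₁₁) := by
  set B := W.toBlocks₁₁
  have hB : ∀ i j, 0 ≤ B i j := fun _ _ => hW _ _
  rw [isUnit_iff_isUnit_det, isUnit_iff_ne_zero, Ne, ← exists_mulVec_eq_zero_iff]
  rintro ⟨x, hx0, hx⟩
  rw [sub_mulVec, one_mulVec, sub_eq_zero] at hx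
  set y : α → ℝ := fun i => |x i|
  have hy : y ≤ B *ᵥ y := fun i =>
    calc |x i| = |(B *ᵥ x) i| := by rw [← hx]
      _ ≤ ∑ j, |B i j * x j| := Finset.abs_sum_le_sum_abs _ _
      _ = (B *ᵥ y) i := by simp only [abs_mul, abs_of_nonneg (hB _ _)]; rfl
  obtain ⟨j₀, hj₀⟩ := Function.ne_iff.mp hx0
  obtain ⟨i, -, hi⟩ := Finset.univ.exists_max_image y ⟨j₀, Finset.mem_univ j₀⟩
  have hpos : 0 < y i := (abs_pos.mpr hj₀).trans_le (hi j₀ (Finset.mem_univ j₀))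
  -- The maximizers of `y` are closed under the transitions of `W`, yet never reach `β`.
  let P : Set (α ⊕ β) := {a | ∃ j, a = .inl j ∧ y j = y i}
  have hP : ∀ a ∈ P, ∀ b, 0 < W a b → b ∈ P := by
    rintro _ ⟨j, rfl, hj⟩ b hb
    obtain ⟨hsum, heq⟩ := maximum_principle hB (sum_toBlocks₁₁_le_one hW hrow) hy
      (fun k => hj ▸ hi k (Finset.mem_univ k)) (hj ▸ hpos)
    cases b with
    | inl k => exact ⟨k, rfl, (heq k hb).trans hj⟩
    | inr m =>
      have hC : ∑ m, W.toBlocks₁₂ j m = 0 := by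
        linarith [sum_toBlocks₁₁_add_sum_toBlocks₁₂ hrow j]
      have := (Finset.sum_eq_zero_iff_of_nonneg fun m _ => hW (.inl j) (.inr m)).mp hC m
        (Finset.mem_univ m)
      exact absurd this hb.ne'
  obtain ⟨m⟩ := ‹Nonempty β›
  obtain ⟨k, hk⟩ := hirr (.inl i) (.inr m)
  obtain ⟨j, hj, -⟩ := mem_of_pow_apply_pos hW hP ⟨i, rfl, rfl⟩ k _ hk
  exact Sum.inr_ne_inl hj

theorem isUnit_one_sub_smul_toBlocks₁₁ [DecidableEq α] [DecidableEq β] [Nonempty β]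
    (hW : ∀ i j, 0 ≤ W i j) (hrow : ∀ i, ∑ j, W i j = 1) (hirr : ∀ i j, ∃ k : ℕ, 0 < (W ^ k) i j) :
    ∀ l ∈ Icc (0 : ℝ) 1, IsUnit (1 - (1 - l) • W.toBlocks₁₁) := by
  rintro l ⟨hl0, hl1⟩
  rcases hl0.eq_or_lt with rfl | hl0
  · simpa using isUnit_one_sub_toBlocks₁₁ hW hrow hirr
  · exact isUnit_one_sub_smul (fun _ _ => hW _ _) (sum_toBlocks₁₁_le_one hW hrow) ⟨hl0, hl1⟩

end ToBlocks

section FromBlocks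

variable {n m : Type*} [Fintype n] [DecidableEq n] [Fintype m] [DecidableEq m]

theorem inlSelection_mul_fromBlocks_sub {P K : Matrix n n ℝ} {Q : Matrix n m ℝ} :
    (of fun i j => if j = Sum.inl i then 1 else 0 : Matrix n (n ⊕ m) ℝ)
        * fromBlocks P Q 0 (1 : Matrix m m ℝ)
      - K * (of fun i j => if j = Sum.inl i then 1 else 0 : Matrix n (n ⊕ m) ℝ)
      = fromCols (P - K) Q := by
  ext i (j | k) <;> simp [mul_apply, fromBlocks]

theorem trace_one_add_smul_fromBlocks_mul_fromCols {r : Type*} [Fintype r] (d : ℝ)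
    (X : Matrix r n ℝ) (Y : Matrix r m ℝ) :
    ((1 + d • fromBlocks (0 : Matrix n n ℝ) 0 0 (1 : Matrix m m ℝ))
        * (fromCols X Y)ᵀ * fromCols X Y).trace
      = ∑ i, ∑ j, X i j ^ 2 + (1 + d) * ∑ i, ∑ k, Y i k ^ 2 := by
  simp only [trace, fromBlocks, smul_of, mul_fromCols, diag_apply, Fintype.sum_sum_type,
    fromCols_apply_inl, fromCols_apply_inr, mul_apply, add_apply, one_apply, of_apply,
    Pi.smul_apply, Sum.elim_inl, Sum.elim_inr, smul_eq_mul, transpose_apply, add_mul, ite_mul,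
    one_mul, zero_mul, mul_assoc, Finset.sum_add_distrib, Finset.sum_ite_eq, Finset.mem_univ,
    ↓reduceIte, zero_apply, mul_zero, Finset.sum_const_zero, add_zero, mul_ite, zero_add, sq,
    Finset.mul_sum]
  rw [Finset.sum_comm]
  congr 2 <;> exact Finset.sum_comm

end FromBlocks

end Matrix

section DampedInverse

variable {n : Type*} [Fintype n] [DecidableEq n] {B : Matrix n n ℝ} {l : ℝ}

noncomputable def dampedInv (B : Matrix n n ℝ) (l : ℝ) : Matrix n n ℝ := (1 - (1 - l) • B)⁻¹

theorem dampedInv_nonneg (hB : ∀ i j, 0 ≤ B i j) (hrow : ∀ i, ∑ j, B i j ≤ 1)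
    (hl : l ∈ Ioc (0 : ℝ) 1) (i j : n) : 0 ≤ dampedInv B l i j :=
  inv_one_sub_nonneg (fun i j => mul_nonneg (sub_nonneg.mpr hl.2) (hB i j))
    (sum_smul_apply_lt_one hrow hl) i j

theorem dampedInv_eq_one_add (hU : IsUnit (1 - (1 - l) • B)) :
    dampedInv B l = 1 + (1 - l) • (B * dampedInv B l) := by
  have h : (1 - (1 - l) • B) * dampedInv B l = 1 :=
    mul_nonsing_inv _ ((isUnit_iff_isUnit_det _).mp hU)
  rwa [sub_mul, one_mul, sub_eq_iff_eq_add, smul_mul_assoc] at h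

theorem le_dampedInv_mul_apply {m : Type*} [Fintype m] (hB : ∀ i j, 0 ≤ B i j)
    (hrow : ∀ i, ∑ j, B i j ≤ 1) (hl : l ∈ Ioc (0 : ℝ) 1) {X : Matrix n m ℝ}
    (hX : ∀ i k, 0 ≤ X i k) (i : n) (k : m) : X i k ≤ (dampedInv B l * X) i k := by
  have hBNX := mul_apply_nonneg (mul_apply_nonneg hB (dampedInv_nonneg hB hrow hl)) hX i k
  rw [dampedInv_eq_one_add (isUnit_one_sub_smul hB hrow hl), Matrix.add_mul, Matrix.one_mul,
    Matrix.smul_mul, Matrix.add_apply, Matrix.smul_apply, smul_eq_mul]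
  exact le_add_of_nonneg_right (mul_nonneg (sub_nonneg.mpr hl.2) hBNX)

theorem smul_inv_one_sub_smul_fromBlocks {m : Type*} [Fintype m] [DecidableEq m] (hl : l ≠ 0)
    (hU : IsUnit (1 - (1 - l) • B)) (C : Matrix n m ℝ) :
    l • (1 - (1 - l) • fromBlocks B C 0 (1 : Matrix m m ℝ))⁻¹
      = fromBlocks (l • dampedInv B l) ((1 - l) • dampedInv B l * C) 0 1 := by
  have hblock : 1 - (1 - l) • fromBlocks B C 0 (1 : Matrix m m ℝ)
      = fromBlocks (1 - (1 - l) • B) (-((1 - l) • C)) 0 (l • 1) := by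
    rw [← fromBlocks_one, fromBlocks_smul]
    ext (i | i) (j | j) <;> simp [fromBlocks, one_apply]; split_ifs <;> ring
  have hl1 : IsUnit (l • 1 : Matrix m m ℝ) := isUnit_one.smul (Units.mk0 l hl)
  have hinv1 : (l • 1 : Matrix m m ℝ)⁻¹ = l⁻¹ • 1 := inv_eq_left_inv (by simp [hl])
  rw [hblock, inv_fromBlocks_zero₂₁_of_isUnit_iff _ _ _ (iff_of_true hU hl1), fromBlocks_smul,
    hinv1]
  congr 1
  · simp [dampedInv, smul_smul, hl, Matrix.mul_smul, Matrix.smul_mul]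
  · simp
  · simp [hl]

noncomputable def regularError (K B : Matrix n n ℝ) (l : ℝ) : ℝ :=
  ∑ i, ∑ j, (l • dampedInv B l - K) i j ^ 2

noncomputable def maliciousError {m : Type*} [Fintype m] (B : Matrix n n ℝ) (C : Matrix n m ℝ)
    (l : ℝ) : ℝ :=
  ∑ i, ∑ k, ((1 - l) • dampedInv B l * C) i k ^ 2

section Calculus

attribute [local instance] Matrix.linftyOpNormedAddCommGroup Matrix.linftyOpNormedSpace
  Matrix.linftyOpNormedRing Matrix.linftyOpNormedAlgebra

local instance : CompleteSpace (Matrix n n ℝ) := FiniteDimensional.complete ℝ _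

theorem Matrix.hasDerivAt_apply {ι : Type*} [Fintype ι] {F : ℝ → Matrix ι ι ℝ}
    {F' : Matrix ι ι ℝ} (hF : HasDerivAt F F' l) (i j : ι) :
    HasDerivAt (fun t => F t i j) (F' i j) l :=
  (entryLinearMap ℝ ℝ i j).toContinuousLinearMap.hasFDerivAt.comp_hasDerivAt l hF

theorem Matrix.hasDerivAt_mul_apply {ι m : Type*} [Fintype ι] {F : ℝ → Matrix ι ι ℝ}
    {F' : Matrix ι ι ℝ} (hF : HasDerivAt F F' l) (C : Matrix ι m ℝ) (i : ι) (k : m) :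
    HasDerivAt (fun t => (F t * C) i k) ((F' * C) i k) l := by
  simp only [mul_apply]
  exact HasDerivAt.fun_sum fun j _ => (hasDerivAt_apply hF i j).mul_const _

theorem Matrix.contDiffAt_apply {ι : Type*} [Fintype ι] {F : ℝ → Matrix ι ι ℝ}
    {k : WithTop ℕ∞} (hF : ContDiffAt ℝ k F l) (i j : ι) :
    ContDiffAt ℝ k (fun t => F t i j) l :=
  (entryLinearMap ℝ ℝ i j).toContinuousLinearMap.contDiff.contDiffAt.comp l hF

theorem isOpen_setOf_isUnit_one_sub_smul (B : Matrix n n ℝ) :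
    IsOpen {l : ℝ | IsUnit (1 - (1 - l) • B)} :=
  Units.isOpen.preimage (by fun_prop)

theorem dampedInv_eq_ringInverse_comp (B : Matrix n n ℝ) :
    dampedInv B = Ring.inverse ∘ fun t : ℝ => 1 - (1 - t) • B :=
  funext fun _ => nonsing_inv_eq_ringInverse _

theorem hasDerivAt_dampedInv (hU : IsUnit (1 - (1 - l) • B)) :
    HasDerivAt (dampedInv B) (-(dampedInv B l * B * dampedInv B l)) l := by
  obtain ⟨u, hu⟩ := hU
  have hA : HasDerivAt (fun t : ℝ => 1 - (1 - t) • B) B l := by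
    have := (((hasDerivAt_id l).const_sub 1).smul_const B).const_sub 1
    simp only [neg_smul, one_smul, neg_neg] at this
    exact this
  have hinv : HasFDerivAt Ring.inverse _ (1 - (1 - l) • B) :=
    hu ▸ hasFDerivAt_ringInverse (𝕜 := ℝ) u
  rw [dampedInv_eq_ringInverse_comp]
  refine (hinv.comp_hasDerivAt l hA).congr_deriv ?_
  simp [← hu]

theorem contDiffAt_dampedInv (hU : IsUnit (1 - (1 - l) • B)) {k : WithTop ℕ∞} :
    ContDiffAt ℝ k (dampedInv B) l := by
  obtain ⟨u, hu⟩ := hU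
  have hinv : ContDiffAt ℝ k Ring.inverse (1 - (1 - l) • B) := hu ▸ contDiffAt_ringInverse ℝ u
  rw [dampedInv_eq_ringInverse_comp]
  exact hinv.comp l (by fun_prop)

theorem hasDerivAt_one_sub_smul_dampedInv (hU : IsUnit (1 - (1 - l) • B)) :
    HasDerivAt (fun t => (1 - t) • dampedInv B t) (-(dampedInv B l * dampedInv B l)) l := by
  have h1 : HasDerivAt (fun t : ℝ => 1 - t) (-1) l := by
    simpa using (hasDerivAt_id l).const_sub 1
  refine (h1.smul (hasDerivAt_dampedInv hU)).congr_deriv ?_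
  have hsq : dampedInv B l * dampedInv B l
      = dampedInv B l + (1 - l) • (dampedInv B l * B * dampedInv B l) := by
    nth_rewrite 2 [dampedInv_eq_one_add hU]
    rw [mul_add, mul_one, mul_smul_comm, mul_assoc]
  rw [hsq]
  module

theorem contDiffAt_regularError (K : Matrix n n ℝ) (hU : IsUnit (1 - (1 - l) • B)) :
    ContDiffAt ℝ 1 (regularError K B) l := by
  have hX : ContDiffAt ℝ 1 (fun t => t • dampedInv B t - K) l :=
    (contDiffAt_id.smul (contDiffAt_dampedInv hU)).sub contDiffAt_const
  exact ContDiffAt.sum fun i _ => ContDiffAt.sum fun j _ => (Matrix.contDiffAt_apply hX i j).pow 2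

theorem bddAbove_deriv_regularError_image (K : Matrix n n ℝ)
    (hU : ∀ l ∈ Icc (0 : ℝ) 1, IsUnit (1 - (1 - l) • B)) :
    BddAbove (deriv (regularError K B) '' Icc 0 1) := by
  have hcont : ContinuousOn (deriv (regularError K B)) {l | IsUnit (1 - (1 - l) • B)} :=
    ContDiffOn.continuousOn_deriv_of_isOpen
      (fun _ hl => (contDiffAt_regularError K hl).contDiffWithinAt)
      (isOpen_setOf_isUnit_one_sub_smul B) le_rfl
  exact isCompact_Icc.bddAbove_image (hcont.mono hU)

theorem hasDerivAt_maliciousError {m : Type*} [Fintype m] (C : Matrix n m ℝ)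
    (hU : IsUnit (1 - (1 - l) • B)) :
    HasDerivAt (maliciousError B C)
      (∑ i, ∑ k, 2 * ((1 - l) • dampedInv B l * C) i k
        * (-(dampedInv B l * dampedInv B l) * C) i k) l :=
  HasDerivAt.fun_sum fun i _ => HasDerivAt.fun_sum fun k _ =>
    ((Matrix.hasDerivAt_mul_apply (hasDerivAt_one_sub_smul_dampedInv hU) C i k).pow 2).congr_deriv
      (by ring)

theorem deriv_maliciousError_le {m : Type*} [Fintype m] {C : Matrix n m ℝ}
    (hB : ∀ i j, 0 ≤ B i j) (hrow : ∀ i, ∑ j, B i j ≤ 1) (hC : ∀ i k, 0 ≤ C i k)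
    (hl : l ∈ Ioc (0 : ℝ) 1) (i₀ : n) (k₀ : m) :
    deriv (maliciousError B C) l ≤ -(2 * (1 - l) * C i₀ k₀ ^ 2) := by
  rw [(hasDerivAt_maliciousError C (isUnit_one_sub_smul hB hrow hl)).deriv]
  set N := dampedInv B l
  have hNC : ∀ i k, C i k ≤ (N * C) i k := le_dampedInv_mul_apply hB hrow hl hC
  have hNNC : ∀ i k, (N * C) i k ≤ (N * N * C) i k := by
    rw [Matrix.mul_assoc]
    exact le_dampedInv_mul_apply hB hrow hl fun i k => (hC i k).trans (hNC i k)
  have hterm : ∀ i k, 2 * ((1 - l) • N * C) i k * (-(N * N) * C) i k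
      = -(2 * (1 - l)) * ((N * C) i k * (N * N * C) i k) := fun i k => by
    rw [Matrix.smul_mul, Matrix.neg_mul, Matrix.smul_apply, Matrix.neg_apply, smul_eq_mul]
    ring
  have hnn : ∀ i k, 0 ≤ (N * C) i k * (N * N * C) i k := fun i k =>
    mul_nonneg ((hC i k).trans (hNC i k)) ((hC i k).trans ((hNC i k).trans (hNNC i k)))
  have hsum : C i₀ k₀ ^ 2 ≤ ∑ i, ∑ k, (N * C) i k * (N * N * C) i k :=
    calc C i₀ k₀ ^ 2 ≤ (N * C) i₀ k₀ * (N * N * C) i₀ k₀ := by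
          rw [sq]
          exact mul_le_mul (hNC i₀ k₀) ((hNC i₀ k₀).trans (hNNC i₀ k₀)) (hC i₀ k₀)
            ((hC i₀ k₀).trans (hNC i₀ k₀))
      _ ≤ ∑ k, (N * C) i₀ k * (N * N * C) i₀ k :=
          Finset.single_le_sum (fun k _ => hnn i₀ k) (Finset.mem_univ k₀)
      _ ≤ ∑ i, ∑ k, (N * C) i k * (N * N * C) i k :=
          Finset.single_le_sum (f := fun i => ∑ k, (N * C) i k * (N * N * C) i k)
            (fun i _ => Finset.sum_nonneg fun k _ => hnn i k) (Finset.mem_univ i₀)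
  simp only [hterm, ← Finset.mul_sum]
  nlinarith [hl.2]

end Calculus

theorem exists_deriv_error_le {m : Type*} [Fintype m] {C : Matrix n m ℝ} (K : Matrix n n ℝ)
    (hB : ∀ i j, 0 ≤ B i j) (hrow : ∀ i, ∑ j, B i j ≤ 1) (hC : ∀ i k, 0 ≤ C i k)
    (hU : ∀ l ∈ Icc (0 : ℝ) 1, IsUnit (1 - (1 - l) • B)) (i₀ : n) (k₀ : m) :
    ∃ c, ∀ d, 0 ≤ d → ∀ l ∈ Ioo (0 : ℝ) 1,
      deriv (fun t => regularError K B t + (1 + d) * maliciousError B C t) l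
        ≤ c - d * (2 * C i₀ k₀ ^ 2) * (1 - l) := by
  obtain ⟨c, hc⟩ := bddAbove_deriv_regularError_image K hU
  refine ⟨c, fun d hd l hl => ?_⟩
  have hUl := hU l (Ioo_subset_Icc_self hl)
  have hp := ((contDiffAt_regularError K hUl).differentiableAt one_ne_zero).hasDerivAt
  have hq := (hasDerivAt_maliciousError C hUl).differentiableAt.hasDerivAt
  rw [(hp.fun_add (hq.const_mul (1 + d))).deriv]
  have hpc := hc (mem_image_of_mem _ (Ioo_subset_Icc_self hl))
  have hqc := mul_le_mul_of_nonneg_left (deriv_maliciousError_le hB hrow hC ⟨hl.1, hl.2.le⟩ i₀ k₀)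
    (by linarith : (0 : ℝ) ≤ 1 + d)
  nlinarith [hl.2, sq_nonneg (C i₀ k₀)]

end DampedInverse

theorem exists_forall_neg_of_le_sub_mul {g : ℝ → ℝ → ℝ} {c β : ℝ} (hβ : 0 < β)
    (hg : ∀ d, 0 ≤ d → ∀ l ∈ Ioo (0 : ℝ) 1, g d l ≤ c - d * β * (1 - l)) {ε : ℝ} (hε : 0 < ε) :
    ∃ D, 0 ≤ D ∧ ∀ d, D < d → ∀ l ∈ Ioo (0 : ℝ) 1, l ≤ 1 - ε → g d l < 0 := by
  refine ⟨max 0 (c / (β * ε)), le_max_left _ _, fun d hd l hl hlε => ?_⟩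
  have hd0 : 0 < d := (le_max_left _ _).trans_lt hd
  have hc : c < d * β * ε := by
    have := (le_max_right _ _).trans_lt hd
    rw [div_lt_iff₀ (by positivity)] at this
    linarith
  have hε' : d * β * ε ≤ d * β * (1 - l) :=
    mul_le_mul_of_nonneg_left (by linarith) (by positivity)
  linarith [hg d hd0.le l hl]

theorem critical_points_tend_to_one_general
    (R M : ℕ)
    (W0 : Matrix (Fin R ⊕ Fin M) (Fin R ⊕ Fin M) ℝ)
    (hW0nonneg : ∀ i j, 0 ≤ W0 i j)
    (hW0row : ∀ i, ∑ j, W0 i j = 1)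
    (hW0irr : ∀ i j, ∃ k : ℕ, 0 < (W0 ^ k) i j)
    (W : Matrix (Fin R ⊕ Fin M) (Fin R ⊕ Fin M) ℝ)
    (hW : W = Matrix.fromBlocks W0.toBlocks₁₁ W0.toBlocks₁₂ 0 1)
    (hW12 : W0.toBlocks₁₂ ≠ 0)
    (L : ℝ → Matrix (Fin R ⊕ Fin M) (Fin R ⊕ Fin M) ℝ)
    (hL : ∀ lam : ℝ, L lam = lam • (1 - (1 - lam) • W)⁻¹)
    (S : Matrix (Fin R) (Fin R ⊕ Fin M) ℝ)
    (hS : S = Matrix.of fun i j => if j = Sum.inl i then 1 else 0)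
    (CR : Matrix (Fin R) (Fin R) ℝ)
    (V : Matrix (Fin R ⊕ Fin M) (Fin R ⊕ Fin M) ℝ)
    (hV : V = Matrix.fromBlocks 0 0 0 1)
    (E : ℝ → Matrix (Fin R) (Fin R ⊕ Fin M) ℝ)
    (hE : ∀ lam : ℝ, E lam = S * L lam - CR * S)
    (e : ℝ → ℝ → ℝ)
    (he : ∀ (lam d : ℝ), e lam d = ((1 + d • V) * (E lam)ᵀ * E lam).trace) :
    (∀ lam0 ∈ Set.Ioo (0 : ℝ) 1, ∃ D : ℝ, 0 ≤ D ∧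
        ∀ d : ℝ, D < d → deriv (fun t => e t d) lam0 < 0)
    ∧ ∀ ε : ℝ, 0 < ε → ∃ D : ℝ, 0 ≤ D ∧
        ∀ d : ℝ, D < d → ∀ lam ∈ Set.Ioo (0 : ℝ) 1,
          deriv (fun t => e t d) lam = 0 → 1 - ε < lam := by
  set B := W0.toBlocks₁₁
  set C := W0.toBlocks₁₂
  have hC : ∀ i k, 0 ≤ C i k := fun _ _ => hW0nonneg _ _
  obtain ⟨i₀, k₀, hc⟩ : ∃ i k, 0 < C i k := by
    by_contra! h
    exact hW12 (Matrix.ext fun i k => le_antisymm (h i k) (hC i k))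
  have : Nonempty (Fin M) := ⟨k₀⟩
  have hU := isUnit_one_sub_smul_toBlocks₁₁ hW0nonneg hW0row hW0irr
  have he_eq : ∀ d, ∀ l ∈ Ioo (0 : ℝ) 1,
      e l d = regularError CR B l + (1 + d) * maliciousError B C l := fun d l hl => by
    rw [he, hE, hL, hW, smul_inv_one_sub_smul_fromBlocks hl.1.ne' (hU l (Ioo_subset_Icc_self hl)),
      hS, inlSelection_mul_fromBlocks_sub, hV, trace_one_add_smul_fromBlocks_mul_fromCols]
    rfl
  obtain ⟨c, hbound⟩ := exists_deriv_error_le CR (fun _ _ => hW0nonneg _ _)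
    (sum_toBlocks₁₁_le_one hW0nonneg hW0row) hC hU i₀ k₀
  have hderiv : ∀ d, 0 ≤ d → ∀ l ∈ Ioo (0 : ℝ) 1,
      deriv (fun t => e t d) l ≤ c - d * (2 * C i₀ k₀ ^ 2) * (1 - l) := fun d hd l hl => by
    have hloc : (fun t => e t d) =ᶠ[𝓝 l]
        fun t => regularError CR B t + (1 + d) * maliciousError B C t :=
      eventually_of_mem (isOpen_Ioo.mem_nhds hl) fun t ht => he_eq d t ht
    exact hloc.deriv_eq ▸ hbound d hd l hl
  refine ⟨fun l₀ hl₀ => ?_, fun ε hε => ?_⟩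
  · obtain ⟨D, hD, hneg⟩ :=
      exists_forall_neg_of_le_sub_mul (by positivity) hderiv (sub_pos.mpr hl₀.2)
    exact ⟨D, hD, fun d hd => hneg d hd l₀ hl₀ (sub_sub_cancel 1 l₀).ge⟩
  · obtain ⟨D, hD, hneg⟩ := exists_forall_neg_of_le_sub_mul (by positivity) hderiv hε
    exact ⟨D, hD, fun d hd l hl hcrit => not_le.mp fun hle => (hneg d hd l hl hle).ne hcrit⟩

/-- In the malicious-agent setup, for every `λ₀ ∈ (0,1)` there is
`D ≥ 0` such that `(∂e/∂λ)(λ₀, d) < 0` for all `d > D` (so `λ₀` is not a critical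
point of `e(·, d)` for `d > D`); consequently, as `d → +∞`, every critical point of
`e(·, d)` in `(0,1)` tends to `1`. -/
theorem critical_points_tend_to_one
    (R M : ℕ) (hR : 2 ≤ R) (hM : 1 ≤ M)
    (W0 : Matrix (Fin R ⊕ Fin M) (Fin R ⊕ Fin M) ℝ)
    (hW0symm : W0.IsSymm)
    (hW0nonneg : ∀ i j, 0 ≤ W0 i j)
    (hW0row : ∀ i, ∑ j, W0 i j = 1)
    (hW0diag : ∀ i, W0 i i = 0)
    (hW0irr : ∀ i j, ∃ k : ℕ, 0 < (W0 ^ k) i j)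
    (W : Matrix (Fin R ⊕ Fin M) (Fin R ⊕ Fin M) ℝ)
    (hW : W = Matrix.fromBlocks W0.toBlocks₁₁ W0.toBlocks₁₂ 0 1)
    (hW12 : W0.toBlocks₁₂ ≠ 0)
    (L : ℝ → Matrix (Fin R ⊕ Fin M) (Fin R ⊕ Fin M) ℝ)
    (hL : ∀ lam : ℝ, L lam = lam • (1 - (1 - lam) • W)⁻¹)
    (S : Matrix (Fin R) (Fin R ⊕ Fin M) ℝ)
    (hS : S = Matrix.of fun i j => if j = Sum.inl i then 1 else 0)
    (CR : Matrix (Fin R) (Fin R) ℝ)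
    (hCR : CR = Matrix.of fun _ _ => (R : ℝ)⁻¹)
    (V : Matrix (Fin R ⊕ Fin M) (Fin R ⊕ Fin M) ℝ)
    (hV : V = Matrix.fromBlocks 0 0 0 1)
    (E : ℝ → Matrix (Fin R) (Fin R ⊕ Fin M) ℝ)
    (hE : ∀ lam : ℝ, E lam = S * L lam - CR * S)
    (e : ℝ → ℝ → ℝ)
    (he : ∀ (lam d : ℝ), e lam d = ((1 + d • V) * (E lam)ᵀ * E lam).trace) :
    (∀ lam0 ∈ Set.Ioo (0 : ℝ) 1, ∃ D : ℝ, 0 ≤ D ∧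
        ∀ d : ℝ, D < d → deriv (fun t => e t d) lam0 < 0)
    ∧ ∀ ε : ℝ, 0 < ε → ∃ D : ℝ, 0 ≤ D ∧
        ∀ d : ℝ, D < d → ∀ lam ∈ Set.Ioo (0 : ℝ) 1,
          deriv (fun t => e t d) lam = 0 → 1 - ε < lam :=
  critical_points_tend_to_one_general R M W0 hW0nonneg hW0row hW0irr W hW hW12 L hL S hS CR V hV E
    hE e he
end

section
/- Let W be an N×N real matrix, v ∈ ℝ^N with W·v = μ·v for some μ ∈ ℝ, and λ ∈ ℝ with 1 − (1−λ)·μ ≠ 0 and I_N − (1−λ)W invertible. Writing L̃ := (I_N − (1−λ)W)⁻¹, the derivative matrix dL/dλ = L̃ − λ·L̃·W·L̃ satisfies (dL/dλ)·v = σ(λ)·v, where σ(λ) = (1 − λμ/(1 − (1−λ)μ)) / (1 − (1−λ)μ). In particular, if μ = 1 and λ > 0 then σ(λ) = 0, so the eigenvector associated with eigenvalue 1 of W lies in the kernel of dL/dλ. -/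
open Matrix

/-- If `W·v = μ·v`, `1 − (1−λ)·μ ≠ 0`, `I − (1−λ)W` is invertible,
`L̃ = (I − (1−λ)W)⁻¹`, then `dL/dλ = L̃ − λ·L̃·W·L̃` satisfies `(dL/dλ)·v = σ(λ)·v` with
`σ(λ) = (1 − λμ/(1 − (1−λ)μ)) / (1 − (1−λ)μ)`; in particular if `μ = 1` and `λ > 0`
then `σ(λ) = 0`, so the eigenvector of `W` for eigenvalue `1` lies in the kernel of
`dL/dλ`. -/
theorem FJ_derivative_eigenvector
    (N : ℕ) (W : Matrix (Fin N) (Fin N) ℝ) (v : Fin N → ℝ) (mu lam : ℝ)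
    (hv : W.mulVec v = mu • v)
    (hmu : 1 - (1 - lam) * mu ≠ 0)
    (hinv : IsUnit (1 - (1 - lam) • W))
    (Lt D : Matrix (Fin N) (Fin N) ℝ)
    (hLt : Lt = (1 - (1 - lam) • W)⁻¹)
    (hD : D = Lt - lam • (Lt * W * Lt))
    (σ : ℝ)
    (hσ : σ = (1 - lam * mu / (1 - (1 - lam) * mu)) / (1 - (1 - lam) * mu)) :
    D.mulVec v = σ • v ∧ (mu = 1 → 0 < lam → σ = 0 ∧ D.mulVec v = 0) := by
  set c : ℝ := 1 - (1 - lam) * mu with hc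
  have hM : (1 - (1 - lam) • W).mulVec v = c • v := by
    rw [sub_mulVec, smul_mulVec, hv, one_mulVec, smul_smul, hc, sub_smul, one_smul]
  have hLtv : Lt.mulVec v = c⁻¹ • v := by
    have h1 : Lt * (1 - (1 - lam) • W) = 1 := by
      rw [hLt]; exact nonsing_inv_mul _ ((Matrix.isUnit_iff_isUnit_det _).mp hinv)
    have : Lt.mulVec ((1 - (1 - lam) • W).mulVec v) = v := by
      rw [mulVec_mulVec, h1, one_mulVec]
    rw [hM, mulVec_smul] at this
    have h2 := congrArg (c⁻¹ • ·) this
    simpa [smul_smul, inv_mul_cancel₀ hmu] using h2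
  have hDv : D.mulVec v = σ • v := by
    have h3 : (Lt * W * Lt) *ᵥ v = (c⁻¹ * mu * c⁻¹) • v := by
      rw [← mulVec_mulVec, ← mulVec_mulVec, hLtv, mulVec_smul, hv, smul_smul,
        mulVec_smul, hLtv, smul_smul]
    rw [hD, sub_mulVec, smul_mulVec, h3, hLtv, smul_smul, ← sub_smul]
    congr 1
    rw [hσ]
    field_simp
    try ring
  refine ⟨hDv, fun hmu1 hlam => ?_⟩
  have hσ0 : σ = 0 := by
    have hcl : c = lam := by rw [hc, hmu1]; ring
    rw [hσ, hmu1, hcl, mul_one, div_self hlam.ne', sub_self, zero_div]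
  exact ⟨hσ0, by rw [hDv, hσ0, zero_smul]⟩
end
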